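/- arXiv:2501.03788 — 12 statements merged into one kernel-verified Lean document; each statement's English description precedes it below -/
import Mathlib

section
/- For all integers n ≥ 1, m ≥ 1, and 1 ≤ a ≤ n, there exists a set S ⊆ [0,n-1] × [0,m-1] such that each row of the rectangle (i.e., each set {(j,i) : 0 ≤ j ≤ n-1} for fixed i) contains exactly a elements of S, and every column (each set {(j,i) : 0 ≤ i ≤ m-1} for fixed j) contains at least ⌊am/n⌋ and at most ⌈am/n⌉ elements of S. -/
/-!
Fill the rows one after another, cyclically through the columns: the `t`-th chosen cell,
`0 ≤ t < am`, is `(t mod n, ⌊t / a⌋)`. Row `i` receives the block `[ai, ai + a)` of `a ≤ n`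
consecutive integers, which lie in `a` distinct columns, and column `j` receives the integers
below `am` congruent to `j` mod `n`, of which there are `⌊am/n⌋` or `⌈am/n⌉`.
-/

open Finset

namespace Nat

lemma injective_mod_prod_div {n a : ℕ} (ha : 0 < a) (han : a ≤ n) :
    Function.Injective fun t : ℕ => (t % n, t / a) := by
  intro s t h
  obtain ⟨hmod, hdiv⟩ := Prod.mk.inj h
  refine Nat.ModEq.eq_of_abs_lt hmod (abs_sub_lt_iff.mpr ?_)
  have hs := (Nat.div_eq_iff ha).mp hdiv
  have ht := (Nat.div_eq_iff ha).mp (rfl : t / a = t / a)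
  omega

lemma card_filter_range_div_eq {a N i : ℕ} (ha : 0 < a) (hi : i < N) :
    #{t ∈ range (a * N) | t / a = i} = a := by
  have hrow : i * a + a ≤ a * N := by nlinarith
  have : {t ∈ range (a * N) | t / a = i} = Ico (i * a) (i * a + a) := by
    ext t
    simp only [mem_filter, mem_range, mem_Ico, Nat.div_eq_iff ha]
    omega
  rw [this, Nat.card_Ico, Nat.add_sub_cancel_left]

lemma card_filter_range_mod_eq {n N j : ℕ} (hn : 0 < n) (hj : j < n) :
    #{t ∈ range N | t % n = j} = N / n + if j < N % n then 1 else 0 := by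
  rw [← Nat.count_eq_card_filter_range, ← Nat.mod_eq_of_lt hj]
  exact Nat.count_modEq_card N hn j

lemma div_le_card_filter_range_mod_eq {n N j : ℕ} (hn : 0 < n) (hj : j < n) :
    N / n ≤ #{t ∈ range N | t % n = j} := by
  rw [card_filter_range_mod_eq hn hj]
  exact Nat.le_add_right _ _

lemma card_filter_range_mod_eq_le {n N j : ℕ} (hn : 0 < n) (hj : j < n) :
    #{t ∈ range N | t % n = j} ≤ (N + n - 1) / n := by
  rw [card_filter_range_mod_eq hn hj, Nat.le_div_iff_mul_le hn]
  have := Nat.div_add_mod' N n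
  split_ifs <;> rw [add_mul] <;> omega

end Nat

theorem stmt_0_general (n m a : ℕ) (ha : 1 ≤ a) (han : a ≤ n) :
    ∃ S : Finset (ℕ × ℕ), S ⊆ Finset.range n ×ˢ Finset.range m ∧
      (∀ i < m, (S.filter (fun p => p.2 = i)).card = a) ∧
      (∀ j < n, a * m / n ≤ (S.filter (fun p => p.1 = j)).card ∧
        (S.filter (fun p => p.1 = j)).card ≤ (a * m + n - 1) / n) := by
  have hn : 0 < n := by omega
  have hf := Nat.injective_mod_prod_div (n := n) ha han
  refine ⟨(range (a * m)).image fun t => (t % n, t / a), ?_, fun i hi => ?_, fun j hj => ?_⟩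
  · rintro _ hp
    obtain ⟨t, ht, rfl⟩ := mem_image.mp hp
    exact mem_product.mpr ⟨mem_range.mpr (Nat.mod_lt t hn),
      mem_range.mpr (Nat.div_lt_of_lt_mul (mem_range.mp ht))⟩
  · rw [filter_image, card_image_of_injective _ hf]
    exact Nat.card_filter_range_div_eq ha hi
  · rw [filter_image, card_image_of_injective _ hf]
    exact ⟨Nat.div_le_card_filter_range_mod_eq hn hj, Nat.card_filter_range_mod_eq_le hn hj⟩

/-- existence of a set with exactly `a` elements in each row
and between `⌊am/n⌋` and `⌈am/n⌉` elements in each column of the rectangle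
`R_{n,m} = [0,n-1] × [0,m-1]` (first coordinate `< n`, second `< m`). -/
theorem stmt_0 (n m a : ℕ) (hn : 1 ≤ n) (hm : 1 ≤ m) (ha : 1 ≤ a) (han : a ≤ n) :
    ∃ S : Finset (ℕ × ℕ), S ⊆ Finset.range n ×ˢ Finset.range m ∧
      (∀ i < m, (S.filter (fun p => p.2 = i)).card = a) ∧
      (∀ j < n, a * m / n ≤ (S.filter (fun p => p.1 = j)).card ∧
        (S.filter (fun p => p.1 = j)).card ≤ (a * m + n - 1) / n) :=
  stmt_0_general n m a ha han
end

section
/- Let n ≥ 1 and let x_{ij} ∈ {0,1} for i,j ∈ {1,...,n}. Suppose a is a positive integer with a ≤ 2n, and suppose that for every i,j: (1 - x_{ij})·(∑_{k≠j} x_{ik} + ∑_{k≠i} x_{kj}) ≥ a·(1 - x_{ij}). Then ∑_{i,j} x_{ij} ≥ a·n/2. -/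
open Finset

/-- if every 0 entry of a 0-1 `n × n` matrix has at least `a`
entries equal to 1 in its row and column combined (excluding itself),
then the sum of all entries is at least `a·n/2`. -/
theorem stmt_1 (n a : ℕ) (hn : 1 ≤ n) (ha : 1 ≤ a) (ha2 : a ≤ 2 * n)
    (x : Fin n → Fin n → ℕ) (hx : ∀ i j, x i j ≤ 1)
    (hdom : ∀ i j, a * (1 - x i j) ≤
      (1 - x i j) * ((∑ k ∈ Finset.univ \ {j}, x i k) + ∑ k ∈ Finset.univ \ {i}, x k j)) :
    a * n ≤ 2 * ∑ i, ∑ j, x i j := by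
  set X : Fin n → Fin n → ℤ := fun i j => (x i j : ℤ) with hX
  set R : Fin n → ℤ := fun i => ∑ j, X i j with hR
  set C : Fin n → ℤ := fun j => ∑ i, X i j with hC
  set S : ℤ := ∑ i, R i with hS
  have hX1 : ∀ i j, X i j ≤ 1 := by
    intro i j; simp only [hX]; exact_mod_cast hx i j
  have hX0 : ∀ i j, 0 ≤ X i j := fun i j => by positivity
  -- pointwise key inequality in ℤ
  have key : ∀ i j, (a : ℤ) * (1 - X i j) ≤ (1 - X i j) * (R i + C j) := by
    intro i j
    have h1 : a * (1 - x i j) ≤ (1 - x i j) * ((∑ k, x i k) + ∑ k, x k j) := by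
      refine (hdom i j).trans ?_
      apply Nat.mul_le_mul_left
      exact Nat.add_le_add (Finset.sum_le_sum_of_subset (Finset.sdiff_subset))
        (Finset.sum_le_sum_of_subset (Finset.sdiff_subset))
    have := (Int.ofNat_le.mpr h1)
    push_cast [Nat.cast_sub (hx i j)] at this
    simpa [hR, hC, hX] using this
  -- row/column zero counts
  have hrowz : ∀ i, ∑ j, (1 - X i j) = (n : ℤ) - R i := by
    intro i; rw [Finset.sum_sub_distrib]; simp [hR]
  have hcolz : ∀ j, ∑ i, (1 - X i j) = (n : ℤ) - C j := by
    intro j; rw [Finset.sum_sub_distrib]; simp [hC]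
  have hSC : ∑ j, C j = S := by
    rw [hS]; simp only [hC, hR]; exact Finset.sum_comm
  -- sum the key inequality
  have big : (a : ℤ) * ((n:ℤ)^2 - S) ≤
      ((n:ℤ) * S - ∑ i, (R i)^2) + ((n:ℤ) * S - ∑ j, (C j)^2) := by
    have h1 : ∑ i, ∑ j, ((a:ℤ) * (1 - X i j)) ≤ ∑ i, ∑ j, (1 - X i j) * (R i + C j) :=
      Finset.sum_le_sum fun i _ => Finset.sum_le_sum fun j _ => key i j
    have e0 : ∀ i, ∑ j, (1 - X i j) * (R i + C j)
        = ((n:ℤ) - R i) * R i + ∑ j, (1 - X i j) * C j := by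
      intro i
      have : ∑ j, (1 - X i j) * (R i + C j)
          = ∑ j, ((1 - X i j) * R i + (1 - X i j) * C j) :=
        Finset.sum_congr rfl fun j _ => by ring
      rw [this, Finset.sum_add_distrib, ← Finset.sum_mul, hrowz i]
    have e3 : ∑ i, ∑ j, (1 - X i j) * C j = ∑ j, ((n:ℤ) - C j) * C j := by
      rw [Finset.sum_comm]
      exact Finset.sum_congr rfl fun j _ => by rw [← Finset.sum_mul, hcolz j]
    have e1 : ∑ i, ((n:ℤ) - R i) * R i = (n:ℤ)*S - ∑ i, (R i)^2 := by
      rw [hS, Finset.mul_sum, ← Finset.sum_sub_distrib]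
      exact Finset.sum_congr rfl fun i _ => by ring
    have e2 : ∑ j, ((n:ℤ) - C j) * C j = (n:ℤ)*S - ∑ j, (C j)^2 := by
      rw [← hSC, Finset.mul_sum, ← Finset.sum_sub_distrib]
      exact Finset.sum_congr rfl fun j _ => by ring
    have hl : ∑ i, ∑ j, ((a:ℤ) * (1 - X i j)) = (a:ℤ) * ((n:ℤ)^2 - S) := by
      simp only [← Finset.mul_sum]
      congr 1
      rw [Finset.sum_congr rfl (fun i _ => hrowz i), Finset.sum_sub_distrib]
      simp [hS]; ring
    calc (a : ℤ) * ((n:ℤ)^2 - S) = ∑ i, ∑ j, ((a:ℤ) * (1 - X i j)) := hl.symm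
      _ ≤ ∑ i, ∑ j, (1 - X i j) * (R i + C j) := h1
      _ = (∑ i, ((n:ℤ) - R i) * R i) + ∑ i, ∑ j, (1 - X i j) * C j := by
          rw [Finset.sum_congr rfl fun i _ => e0 i, Finset.sum_add_distrib]
      _ = _ := by rw [e3, e1, e2]
  -- Cauchy–Schwarz
  have cs1 : S^2 ≤ (n:ℤ) * ∑ i, (R i)^2 := by
    have := sq_sum_le_card_mul_sum_sq (s := (Finset.univ : Finset (Fin n))) (f := R)
    simpa [hS] using this
  have cs2 : S^2 ≤ (n:ℤ) * ∑ j, (C j)^2 := by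
    have := sq_sum_le_card_mul_sum_sq (s := (Finset.univ : Finset (Fin n))) (f := C)
    simpa [hSC] using this
  have hSn : S ≤ (n:ℤ)^2 := by
    rw [hS]
    calc ∑ i, R i ≤ ∑ i : Fin n, ∑ j : Fin n, (1:ℤ) :=
          Finset.sum_le_sum fun i _ => Finset.sum_le_sum fun j _ => hX1 i j
      _ = (n:ℤ)^2 := by simp; ring
  have hS0 : 0 ≤ S := Finset.sum_nonneg fun i _ => Finset.sum_nonneg fun j _ => hX0 i j
  -- finish
  have goal : (a:ℤ) * n ≤ 2 * S := by
    have hn' : (1:ℤ) ≤ n := by exact_mod_cast hn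
    have ha2' : (a:ℤ) ≤ 2 * n := by exact_mod_cast ha2
    rcases eq_or_lt_of_le hSn with h | h
    · nlinarith
    · have h1 : (n:ℤ)^2 - S ≥ 1 := by omega
      nlinarith [mul_le_mul_of_nonneg_left big (by linarith : (0:ℤ) ≤ n),
        mul_nonneg (sub_nonneg.mpr hSn) (by nlinarith : (0:ℤ) ≤ 2*S - a*n)]
  have : (a * n : ℤ) ≤ 2 * ∑ i, ∑ j, (x i j : ℤ) := by
    simpa [hS, hR, hX] using goal
  exact_mod_cast this
end

section
/- Let n,m ≥ 1, let a,b be integers with 0 ≤ a ≤ n, 0 ≤ b ≤ m, and suppose (without loss of generality) am ≥ bn. Then the minimum cardinality of a set A ⊆ [0,n-1]×[0,m-1] such that every point (j,i) ∉ A has at least a points of A in its row (other points with second coordinate i) and at least b points of A in its column (other points with first coordinate j) equals max(am, bn). -/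
open Finset

/-!
Lower bound: a row is either full (`n ≥ a` points) or has an empty cell, which sees at least `a`
points in its row; summing over the `m` rows gives `|A| ≥ a m`.
Upper bound: the staircase puts the point numbered `s < a m` at `(s mod n, ⌊s / a⌋)`, so row `i`
holds the `a ≤ n` cyclically consecutive columns `a i, …, a i + a - 1 (mod n)`. Its `a m` points
are thus spread evenly over the columns: each column gets at least `⌊a m / n⌋ ≥ b` of them.
-/

section Lines

variable {A : Finset (ℕ × ℕ)} {p : ℕ × ℕ}

theorem filter_snd_eq_and_fst_ne_of_notMem (hp : p ∉ A) :
    A.filter (fun q => q.2 = p.2 ∧ q.1 ≠ p.1) = A.filter (fun q => q.2 = p.2) := by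
  refine filter_congr fun q hq => ⟨And.left, fun h2 => ⟨h2, fun h1 => hp ?_⟩⟩
  rwa [← Prod.ext h1 h2]

theorem filter_fst_eq_and_snd_ne_of_notMem (hp : p ∉ A) :
    A.filter (fun q => q.1 = p.1 ∧ q.2 ≠ p.2) = A.filter (fun q => q.1 = p.1) := by
  refine filter_congr fun q hq => ⟨And.left, fun h1 => ⟨h1, fun h2 => hp ?_⟩⟩
  rwa [← Prod.ext h1 h2]

end Lines

section LowerBound

variable {n m a : ℕ} {B : Finset (ℕ × ℕ)}

theorem le_card_filter_snd_eq_of_row_dominating {i : ℕ} (han : a ≤ n)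
    (hrow : ∀ j < n, (j, i) ∉ B → a ≤ #(B.filter (fun q => q.2 = i ∧ q.1 ≠ j))) :
    a ≤ #(B.filter (fun q => q.2 = i)) := by
  by_cases hfull : ∀ j < n, (j, i) ∈ B
  · have hsub : (range n).image (fun j => (j, i)) ⊆ B.filter (fun q => q.2 = i) := by
      intro q hq
      obtain ⟨j, hj, rfl⟩ := mem_image.mp hq
      exact mem_filter.mpr ⟨hfull j (mem_range.mp hj), rfl⟩
    calc a ≤ n := han
      _ = #((range n).image (fun j => (j, i))) := by
        rw [card_image_of_injective _ (Prod.mk_left_injective i), card_range]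
      _ ≤ _ := card_le_card hsub
  · push Not at hfull
    obtain ⟨j, hj, hjB⟩ := hfull
    simpa only [filter_snd_eq_and_fst_ne_of_notMem hjB] using hrow j hj hjB

theorem mul_le_card_of_row_dominating (hB : B ⊆ range n ×ˢ range m) (han : a ≤ n)
    (hrow : ∀ p ∈ range n ×ˢ range m, p ∉ B →
      a ≤ #(B.filter (fun q => q.2 = p.2 ∧ q.1 ≠ p.1))) :
    a * m ≤ #B := by
  have hfiber : ∀ i ∈ range m, a ≤ #(B.filter (fun q => q.2 = i)) := fun i hi =>
    le_card_filter_snd_eq_of_row_dominating han fun j hj hjB =>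
      hrow (j, i) (mem_product.mpr ⟨mem_range.mpr hj, hi⟩) hjB
  calc a * m = ∑ _i ∈ range m, a := by rw [sum_const, card_range, smul_eq_mul, mul_comm]
    _ ≤ ∑ i ∈ range m, #(B.filter (fun q => q.2 = i)) := sum_le_sum hfiber
    _ = #B := (card_eq_sum_card_fiberwise fun q hq => (mem_product.mp (hB hq)).2).symm

end LowerBound

def staircase (n a m : ℕ) : Finset (ℕ × ℕ) :=
  (range (a * m)).image fun s => (s % n, s / a)

section Staircase

variable {n m a : ℕ}

theorem injective_mod_div (ha : 0 < a) (han : a ≤ n) :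
    Function.Injective fun s : ℕ => (s % n, s / a) := by
  suffices h : ∀ s s', s ≤ s' → s % n = s' % n → s / a = s' / a → s = s' by
    intro s s' hss'
    obtain ⟨hmod, hdiv⟩ := Prod.mk.inj hss'
    rcases le_total s s' with hle | hle
    · exact h s s' hle hmod hdiv
    · exact (h s' s hle hmod.symm hdiv.symm).symm
  intro s s' hle hmod hdiv
  have hclose : s' - s < n := by
    have := Nat.div_add_mod s a
    have := Nat.div_add_mod s' a
    have := Nat.mod_lt s' ha
    rw [hdiv] at *
    omega
  have := Nat.eq_zero_of_dvd_of_lt ((Nat.modEq_iff_dvd' hle).mp hmod) hclose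
  omega

theorem card_staircase (han : a ≤ n) : #(staircase n a m) = a * m := by
  rcases Nat.eq_zero_or_pos a with rfl | ha
  · simp [staircase]
  · rw [staircase, card_image_of_injective _ (injective_mod_div ha han), card_range]

theorem staircase_subset (han : a ≤ n) : staircase n a m ⊆ range n ×ˢ range m := by
  intro q hq
  obtain ⟨s, hs, rfl⟩ := mem_image.mp hq
  have ha : 0 < a := Nat.pos_of_ne_zero (by rintro rfl; simp at hs)
  rw [mem_range] at hs
  exact mem_product.mpr ⟨mem_range.mpr (Nat.mod_lt s (by omega)),
    mem_range.mpr ((Nat.div_lt_iff_lt_mul ha).mpr (by linarith))⟩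

theorem card_filter_staircase (ha : 0 < a) (han : a ≤ n) (P : ℕ × ℕ → Prop) [DecidablePred P] :
    #((staircase n a m).filter P) = #((range (a * m)).filter fun s => P (s % n, s / a)) := by
  rw [staircase, filter_image, card_image_of_injective _ (injective_mod_div ha han)]

theorem le_card_filter_snd_eq_staircase (han : a ≤ n) {i : ℕ} (hi : i < m) :
    a ≤ #((staircase n a m).filter fun q => q.2 = i) := by
  rcases Nat.eq_zero_or_pos a with rfl | ha
  · exact Nat.zero_le _
  rw [card_filter_staircase ha han]
  have hsub : Ico (a * i) (a * i + a) ⊆ (range (a * m)).filter fun s => s / a = i := by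
    intro s hs
    rw [mem_Ico] at hs
    refine mem_filter.mpr ⟨mem_range.mpr ?_, ?_⟩
    · nlinarith
    · exact Nat.div_eq_of_lt_le (by linarith) (by linarith)
  simpa using card_le_card hsub

theorem le_card_filter_fst_eq_staircase {b : ℕ} (han : a ≤ n) (hb : b * n ≤ a * m) {j : ℕ}
    (hj : j < n) : b ≤ #((staircase n a m).filter fun q => q.1 = j) := by
  rcases Nat.eq_zero_or_pos a with rfl | ha
  · have : b = 0 := by simpa [Nat.pos_iff_ne_zero.mp (by omega : 0 < n)] using hb
    omega
  rw [card_filter_staircase ha han]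
  have hcount : #((range (a * m)).filter fun s => s % n = j) = (a * m).count (· ≡ j [MOD n]) := by
    rw [Nat.count_eq_card_filter_range]
    simp only [Nat.ModEq, Nat.mod_eq_of_lt hj]
  rw [hcount, Nat.count_modEq_card _ (by omega)]
  exact le_add_right ((Nat.le_div_iff_mul_le (by omega)).mpr hb)

theorem staircase_dominating {b : ℕ} (han : a ≤ n) (hb : b * n ≤ a * m) :
    ∀ p ∈ range n ×ˢ range m, p ∉ staircase n a m →
      a ≤ #((staircase n a m).filter (fun q => q.2 = p.2 ∧ q.1 ≠ p.1)) ∧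
      b ≤ #((staircase n a m).filter (fun q => q.1 = p.1 ∧ q.2 ≠ p.2)) := by
  intro p hp hpA
  rw [mem_product, mem_range, mem_range] at hp
  rw [filter_snd_eq_and_fst_ne_of_notMem hpA, filter_fst_eq_and_snd_ne_of_notMem hpA]
  exact ⟨le_card_filter_snd_eq_staircase han hp.2, le_card_filter_fst_eq_staircase han hb hp.1⟩

end Staircase

theorem stmt_4_general (n m a b : ℕ)
    (han : a ≤ n) (hwlog : b * n ≤ a * m) :
    sInf {k : ℕ | ∃ A : Finset (ℕ × ℕ), A ⊆ Finset.range n ×ˢ Finset.range m ∧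
      A.card = k ∧
      ∀ p ∈ Finset.range n ×ˢ Finset.range m, p ∉ A →
        a ≤ (A.filter (fun q => q.2 = p.2 ∧ q.1 ≠ p.1)).card ∧
        b ≤ (A.filter (fun q => q.1 = p.1 ∧ q.2 ≠ p.2)).card} =
    max (a * m) (b * n) := by
  rw [max_eq_left hwlog]
  refine IsLeast.csInf_eq ⟨⟨staircase n a m, staircase_subset han, card_staircase han,
    staircase_dominating han hwlog⟩, ?_⟩
  rintro k ⟨B, hB, rfl, hdom⟩
  exact mul_le_card_of_row_dominating hB han fun p hp hpB => (hdom p hp hpB).1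

/-- the Young domination number for the L-shaped zero-set `V_{a,b}`:
the minimum size of `A ⊆ [0,n-1]×[0,m-1]` such that every point `(j,i) ∉ A` has at
least `a` points of `A` in its row and at least `b` points of `A` in its column
equals `max(am, bn)` (assuming `am ≥ bn`). -/
theorem stmt_4 (n m a b : ℕ) (hn : 1 ≤ n) (hm : 1 ≤ m)
    (han : a ≤ n) (hbm : b ≤ m) (hwlog : b * n ≤ a * m) :
    sInf {k : ℕ | ∃ A : Finset (ℕ × ℕ), A ⊆ Finset.range n ×ˢ Finset.range m ∧
      A.card = k ∧
      ∀ p ∈ Finset.range n ×ˢ Finset.range m, p ∉ A →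
        a ≤ (A.filter (fun q => q.2 = p.2 ∧ q.1 ≠ p.1)).card ∧
        b ≤ (A.filter (fun q => q.1 = p.1 ∧ q.2 ≠ p.2)).card} =
    max (a * m) (b * n) :=
  stmt_4_general n m a b han hwlog
end

section
/- Let n,m ≥ 1 and 1 ≤ a ≤ n, 1 ≤ b ≤ m. The minimum cardinality of a set A ⊆ [0,n-1]×[0,m-1] such that every point (j,i) ∉ A has at least a points of A in its row or at least b points of A in its column equals min over b ≤ x ≤ m and a ≤ y ≤ n of ( (m−x)(n−y) + max(ax, by) ). -/
/-!
Lower bound: for a dominating set `A`, let `X` be the rows (second coordinate fixed) holding at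
least `a` points of `A` and `Y` the columns holding at least `b`. Every grid point off `X` and
`Y` must lie in `A`, which accounts for `(m - |X|)(n - |Y|)` points; the remaining points, those
on `X` or `Y`, number at least `a|X|`, `b|Y|` and, by inclusion–exclusion,
`a|X| + b|Y| - |X||Y|`. Raising `|X|` to `b` and `|Y|` to `a` never increases the bound.

Upper bound: fill the block `[y, n) × [x, m)` and add a set `B ⊆ [0, y) × [0, x)` of size
`max (ax) (by)` with at least `a` points on each of its rows and `b` on each of its columns;
if `by ≤ ax`, the points `(t % y, t / a)` for `t < ax` do.
-/
open Finset

def IsLineCover (a b x y : ℕ) (B : Finset (ℕ × ℕ)) : Prop :=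
  B ⊆ range y ×ˢ range x ∧ (∀ i < x, a ≤ #{q ∈ B | q.2 = i}) ∧ ∀ j < y, b ≤ #{q ∈ B | q.1 = j}

def IsDominating (n m a b : ℕ) (A : Finset (ℕ × ℕ)) : Prop :=
  ∀ p ∈ range n ×ˢ range m, p ∉ A →
    a ≤ #{q ∈ A | q.2 = p.2 ∧ q.1 ≠ p.1} ∨ b ≤ #{q ∈ A | q.1 = p.1 ∧ q.2 ≠ p.2}

lemma mod_div_injective {a y : ℕ} (ha : 0 < a) (hay : a ≤ y) :
    Function.Injective fun t : ℕ => (t % y, t / a) := by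
  intro t s hts
  obtain ⟨hmod, hdiv⟩ := Prod.mk.inj hts
  have ht := Nat.div_add_mod t a
  have hs := Nat.div_add_mod s a
  rw [hdiv] at ht
  have := Nat.mod_lt t ha
  have := Nat.mod_lt s ha
  exact Nat.ModEq.eq_of_abs_lt hmod (abs_sub_lt_iff.mpr (by omega))

lemma exists_isLineCover_of_mul_le {a b x y : ℕ} (ha : 0 < a) (hay : a ≤ y)
    (hba : b * y ≤ a * x) : ∃ B, IsLineCover a b x y B ∧ #B = a * x := by
  have hf := mod_div_injective ha hay
  have hy : 0 < y := ha.trans_le hay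
  refine ⟨(range (a * x)).image fun t => (t % y, t / a), ⟨?_, fun i hi => ?_, fun j hj => ?_⟩,
    by rw [card_image_of_injective _ hf, card_range]⟩
  · simp only [subset_iff, mem_image, mem_product, mem_range, forall_exists_index, and_imp]
    rintro _ t ht rfl
    exact ⟨Nat.mod_lt _ hy, Nat.div_lt_of_lt_mul ht⟩
  · rw [filter_image, card_image_of_injective _ hf]
    calc a = #(Ico (a * i) (a * i + a)) := by simp
      _ ≤ _ := card_le_card fun t ht => by
        rw [mem_Ico] at ht
        simp only [mem_filter, mem_range]
        exact ⟨by nlinarith, Nat.div_eq_of_lt_le (by linarith) (by linarith)⟩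
  · rw [filter_image, card_image_of_injective _ hf]
    calc b ≤ a * x / y := (Nat.le_div_iff_mul_le hy).mpr hba
      _ ≤ (a * x).count (· ≡ j [MOD y]) := by rw [Nat.count_modEq_card _ hy]; omega
      _ = _ := by simp [Nat.count_eq_card_filter_range, Nat.ModEq, Nat.mod_eq_of_lt hj]

lemma IsLineCover.image_swap {a b x y : ℕ} {B : Finset (ℕ × ℕ)} (hB : IsLineCover a b x y B) :
    IsLineCover b a y x (B.image Prod.swap) := by
  refine ⟨(image_subset_image hB.1).trans (image_swap_product _ _).le, fun i hi => ?_,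
    fun j hj => ?_⟩
  · rw [filter_image, card_image_of_injective _ Prod.swap_injective]
    exact hB.2.2 i hi
  · rw [filter_image, card_image_of_injective _ Prod.swap_injective]
    exact hB.2.1 j hj

lemma exists_isLineCover_card_eq_max {a b x y : ℕ} (ha : 0 < a) (hb : 0 < b) (hay : a ≤ y)
    (hbx : b ≤ x) : ∃ B, IsLineCover a b x y B ∧ #B = max (a * x) (b * y) := by
  rcases le_total (b * y) (a * x) with h | h
  · obtain ⟨B, hB, hcard⟩ := exists_isLineCover_of_mul_le ha hay h
    exact ⟨B, hB, by rw [hcard, max_eq_left h]⟩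
  · obtain ⟨B, hB, hcard⟩ := exists_isLineCover_of_mul_le hb hbx h
    refine ⟨B.image Prod.swap, hB.image_swap, ?_⟩
    rw [card_image_of_injective _ Prod.swap_injective, hcard, max_eq_right h]

lemma IsLineCover.isDominating_union {a b x y n m : ℕ} {B : Finset (ℕ × ℕ)}
    (hB : IsLineCover a b x y B) : IsDominating n m a b (B ∪ Ico y n ×ˢ Ico x m) := by
  rintro ⟨j, i⟩ hp hpA
  simp only [mem_product, mem_range, mem_union, mem_Ico, not_or] at hp hpA
  by_cases hi : i < x
  · left
    refine (hB.2.1 i hi).trans (card_le_card fun q hq => ?_)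
    simp only [mem_filter, mem_union] at hq ⊢
    exact ⟨Or.inl hq.1, hq.2, fun h => hpA.1 ((Prod.ext h hq.2 : q = (j, i)) ▸ hq.1)⟩
  · right
    refine (hB.2.2 j (by omega)).trans (card_le_card fun q hq => ?_)
    simp only [mem_filter, mem_union] at hq ⊢
    exact ⟨Or.inl hq.1, hq.2, fun h => hpA.1 ((Prod.ext hq.2 h : q = (j, i)) ▸ hq.1)⟩

lemma exists_isDominating_card_eq {n m a b x y : ℕ} (ha : 0 < a) (hb : 0 < b)
    (hbx : b ≤ x) (hxm : x ≤ m) (hay : a ≤ y) (hyn : y ≤ n) :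
    ∃ A ⊆ range n ×ˢ range m,
      #A = (m - x) * (n - y) + max (a * x) (b * y) ∧ IsDominating n m a b A := by
  obtain ⟨B, hB, hcard⟩ := exists_isLineCover_card_eq_max ha hb hay hbx
  have hdisj : Disjoint B (Ico y n ×ˢ Ico x m) := disjoint_left.mpr fun q hqB hq => by
    have := hB.1 hqB
    simp only [mem_product, mem_range, mem_Ico] at this hq
    omega
  refine ⟨B ∪ Ico y n ×ˢ Ico x m, union_subset ?_ ?_, ?_, hB.isDominating_union⟩
  · exact hB.1.trans (product_subset_product (range_subset_range.mpr hyn)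
      (range_subset_range.mpr hxm))
  · exact product_subset_product (fun _ hj => mem_range.mpr (mem_Ico.mp hj).2)
      fun _ hi => mem_range.mpr (mem_Ico.mp hi).2
  · rw [card_union_of_disjoint hdisj, card_product, Nat.card_Ico, Nat.card_Ico, hcard,
      add_comm, mul_comm]

lemma mul_card_le_card_filter_mem {α β : Type*} [DecidableEq β] (f : α → β) (A : Finset α)
    (S : Finset β) {a : ℕ} (h : ∀ i ∈ S, a ≤ #{q ∈ A | f q = i}) :
    a * #S ≤ #{q ∈ A | f q ∈ S} := by
  rw [card_eq_sum_card_fiberwise (s := {q ∈ A | f q ∈ S}) (t := S)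
    fun q hq => (mem_filter.mp hq).2, mul_comm, ← smul_eq_mul]
  refine card_nsmul_le_sum _ _ _ fun i hi => (h i hi).trans_eq ?_
  rw [filter_filter]
  exact congrArg card (filter_congr fun q _ => ⟨fun hq => ⟨hq ▸ hi, hq⟩, And.right⟩)

lemma IsDominating.le_card_or_le_card {n m a b : ℕ} {A : Finset (ℕ × ℕ)}
    (hA : IsDominating n m a b A) {p : ℕ × ℕ} (hp : p ∈ range n ×ˢ range m) (hpA : p ∉ A) :
    a ≤ #{q ∈ A | q.2 = p.2} ∨ b ≤ #{q ∈ A | q.1 = p.1} :=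
  have hmono {P Q : ℕ × ℕ → Prop} [DecidablePred P] [DecidablePred Q] :
      #{q ∈ A | P q ∧ Q q} ≤ #{q ∈ A | P q} :=
    card_le_card (monotone_filter_right _ fun _ _ => And.left)
  (hA p hp hpA).imp (fun h => h.trans hmono) fun h => h.trans hmono

lemma IsDominating.exists_le_card {n m a b : ℕ} {A : Finset (ℕ × ℕ)}
    (hA : IsDominating n m a b A) :
    ∃ x' ≤ m, ∃ y' ≤ n, ∃ w, (m - x') * (n - y') + w ≤ #A ∧
      a * x' ≤ w ∧ b * y' ≤ w ∧ a * x' + b * y' ≤ w + x' * y' := by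
  set X := {i ∈ range m | a ≤ #{q ∈ A | q.2 = i}}
  set Y := {j ∈ range n | b ≤ #{q ∈ A | q.1 = j}}
  set U := {q ∈ A | q.2 ∈ X}
  set V := {q ∈ A | q.1 ∈ Y}
  have hU : a * #X ≤ #U :=
    mul_card_le_card_filter_mem Prod.snd A X fun i hi => (mem_filter.mp hi).2
  have hV : b * #Y ≤ #V :=
    mul_card_le_card_filter_mem Prod.fst A Y fun j hj => (mem_filter.mp hj).2
  have hUV : #(U ∩ V) ≤ #Y * #X := by
    rw [← card_product]
    exact card_le_card fun q hq => by
      simp only [U, V, mem_inter, mem_filter] at hq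
      exact mem_product.mpr ⟨hq.2.2, hq.1.2⟩
  have hblock : (range n \ Y) ×ˢ (range m \ X) ⊆ {q ∈ A | q ∉ U ∪ V} := by
    intro p hp
    obtain ⟨⟨hpn, hpY⟩, hpm, hpX⟩ := mem_product.mp hp |>.imp mem_sdiff.mp mem_sdiff.mp
    have hpA : p ∈ A := by
      by_contra hpA
      rcases hA.le_card_or_le_card (mem_product.mpr ⟨hpn, hpm⟩) hpA with h | h
      exacts [hpX (mem_filter.mpr ⟨hpm, h⟩), hpY (mem_filter.mpr ⟨hpn, h⟩)]
    simp [U, V, hpA, hpX, hpY]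
  refine ⟨#X, (card_filter_le _ _).trans_eq (card_range m), #Y,
    (card_filter_le _ _).trans_eq (card_range n), #(U ∪ V), ?_, ?_, ?_, ?_⟩
  · calc (m - #X) * (n - #Y) + #(U ∪ V)
          = #((range n \ Y) ×ˢ (range m \ X)) + #(U ∪ V) := by
            rw [card_product, card_sdiff_of_subset (filter_subset _ _),
              card_sdiff_of_subset (filter_subset _ _), card_range, card_range, mul_comm]
        _ ≤ #{q ∈ A | q ∉ U ∪ V} + #{q ∈ A | q ∈ U ∪ V} :=
            add_le_add (card_le_card hblock) (card_le_card fun q hq => mem_filter.mpr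
              ⟨union_subset (filter_subset _ _) (filter_subset _ _) hq, hq⟩)
        _ = #A := by rw [add_comm, card_filter_add_card_filter_not]
  · exact hU.trans (card_le_card subset_union_left)
  · exact hV.trans (card_le_card subset_union_right)
  · have := card_union_add_card_inter U V
    nlinarith

lemma exists_value_le {n m a b x' y' w : ℕ} (han : a ≤ n) (hbm : b ≤ m)
    (hx' : x' ≤ m) (hy' : y' ≤ n) (h1 : a * x' ≤ w) (h2 : b * y' ≤ w)
    (h3 : a * x' + b * y' ≤ w + x' * y') :
    ∃ x y, b ≤ x ∧ x ≤ m ∧ a ≤ y ∧ y ≤ n ∧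
      (m - x) * (n - y) + max (a * x) (b * y) ≤ (m - x') * (n - y') + w := by
  refine ⟨max x' b, max y' a, le_max_right _ _, max_le hx' hbm, le_max_right _ _,
    max_le hy' han, ?_⟩
  rcases le_total b x' with hx | hx <;> rcases le_total a y' with hy | hy
  · rw [max_eq_left hx, max_eq_left hy]
    exact Nat.add_le_add_left (max_le h1 h2) _
  · rw [max_eq_left hx, max_eq_right hy, max_eq_left (by nlinarith)]
    exact Nat.add_le_add (Nat.mul_le_mul_left _ (Nat.sub_le_sub_left hy n)) h1
  · rw [max_eq_right hx, max_eq_left hy, max_eq_right (by nlinarith)]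
    exact Nat.add_le_add (Nat.mul_le_mul_right _ (Nat.sub_le_sub_left hx m)) h2
  · rw [max_eq_right hx, max_eq_right hy, mul_comm b a, max_self]
    zify [hbm, han, hx', hy'] at h3 ⊢
    nlinarith [mul_nonneg (by omega : (0 : ℤ) ≤ b - x') (by omega : (0 : ℤ) ≤ n - a),
      mul_nonneg (by omega : (0 : ℤ) ≤ a - y') (by omega : (0 : ℤ) ≤ m - b)]

/-- the Young domination number for the rectangular zero-set `R_{a,b}`:
the minimum size of `A ⊆ [0,n-1]×[0,m-1]` such that every point `(j,i) ∉ A` has at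
least `a` points of `A` in its row or at least `b` points of `A` in its column equals
`min_{b ≤ x ≤ m, a ≤ y ≤ n} ((m−x)(n−y) + max(ax, by))`. -/
theorem stmt_5 (n m a b : ℕ) (ha : 1 ≤ a) (han : a ≤ n) (hb : 1 ≤ b) (hbm : b ≤ m) :
    sInf {k : ℕ | ∃ A : Finset (ℕ × ℕ), A ⊆ Finset.range n ×ˢ Finset.range m ∧
      A.card = k ∧
      ∀ p ∈ Finset.range n ×ˢ Finset.range m, p ∉ A →
        a ≤ (A.filter (fun q => q.2 = p.2 ∧ q.1 ≠ p.1)).card ∨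
        b ≤ (A.filter (fun q => q.1 = p.1 ∧ q.2 ≠ p.2)).card} =
    sInf {v : ℕ | ∃ x y : ℕ, b ≤ x ∧ x ≤ m ∧ a ≤ y ∧ y ≤ n ∧
      v = (m - x) * (n - y) + max (a * x) (b * y)} := by
  apply le_antisymm
  · refine le_csInf ⟨_, b, a, le_rfl, hbm, le_rfl, han, rfl⟩ ?_
    rintro _ ⟨x, y, hbx, hxm, hay, hyn, rfl⟩
    obtain ⟨A, hAsub, hAcard, hAdom⟩ := exists_isDominating_card_eq ha hb hbx hxm hay hyn
    exact Nat.sInf_le ⟨A, hAsub, hAcard, hAdom⟩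
  · refine le_csInf ⟨_, range n ×ˢ range m, subset_rfl, rfl, fun _ hp hpA => absurd hp hpA⟩ ?_
    rintro _ ⟨A, -, rfl, hAdom⟩
    obtain ⟨x', hx', y', hy', w, hA, h1, h2, h3⟩ := IsDominating.exists_le_card hAdom
    obtain ⟨x, y, hbx, hxm, hay, hyn, hle⟩ := exists_value_le han hbm hx' hy' h1 h2 h3
    exact le_trans (Nat.sInf_le ⟨x, y, hbx, hxm, hay, hyn, rfl⟩) (hle.trans hA)
end

section
/- Let n ≥ 1 and 1 ≤ a ≤ n. Then min over a ≤ y ≤ n of ((n−y)² + ay) equals: an − a²/4 if a ≤ 2n/3 and a is even; an − (a²−1)/4 if a ≤ (2n+1)/3 and a is odd; and a² + (n−a)² otherwise. -/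
open Finset

lemma consec_nonneg (m : ℤ) : 0 ≤ m * (m - 1) := by
  rcases le_or_gt 1 m with h | h
  · exact mul_nonneg (by linarith) (by linarith)
  · have h0 := mul_nonneg (by linarith : (0:ℤ) ≤ -m) (by linarith : (0:ℤ) ≤ 1 - m)
    nlinarith

/-- closed-form evaluation of `min_{a ≤ y ≤ n} ((n−y)² + ay)`. -/
theorem stmt_6 (n a : ℕ) (hn : 1 ≤ n) (ha : 1 ≤ a) (han : a ≤ n) :
    sInf {v : ℕ | ∃ y : ℕ, a ≤ y ∧ y ≤ n ∧ v = (n - y) ^ 2 + a * y} =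
      if Even a ∧ 3 * a ≤ 2 * n then a * n - a ^ 2 / 4
      else if Odd a ∧ 3 * a ≤ 2 * n + 1 then a * n - (a ^ 2 - 1) / 4
      else a ^ 2 + (n - a) ^ 2 := by
  split_ifs with h1 h2
  · -- a even, 3a ≤ 2n
    obtain ⟨⟨k, rfl⟩, h3⟩ := h1
    have hdiv : (k + k) ^ 2 / 4 = k ^ 2 := by
      have : (k + k) ^ 2 = k ^ 2 * 4 := by ring
      rw [this, Nat.mul_div_cancel _ (by norm_num)]
    rw [hdiv]
    have hk2 : k ^ 2 ≤ (k + k) * n := by nlinarith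
    apply le_antisymm
    · apply Nat.sInf_le
      refine ⟨n - k, by omega, by omega, ?_⟩
      have h4 : n - (n - k) = k := by omega
      rw [h4]
      zify [hk2, show k ≤ n by omega]
      ring
    · refine le_csInf ⟨_, ⟨n - k, by omega, by omega, rfl⟩⟩ ?_
      rintro v ⟨y, hya, hyn, rfl⟩
      zify [hk2, hyn]
      nlinarith [sq_nonneg ((n : ℤ) - y - k)]
  · -- a odd, 3a ≤ 2n+1
    obtain ⟨⟨k, rfl⟩, h3⟩ := h2
    have hdiv : ((2 * k + 1) ^ 2 - 1) / 4 = k ^ 2 + k := by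
      have : (2 * k + 1) ^ 2 - 1 = (k ^ 2 + k) * 4 := by
        have : (2 * k + 1) ^ 2 = (k ^ 2 + k) * 4 + 1 := by ring
        omega
      rw [this, Nat.mul_div_cancel _ (by norm_num)]
    rw [hdiv]
    have hk2 : k ^ 2 + k ≤ (2 * k + 1) * n := by nlinarith
    apply le_antisymm
    · apply Nat.sInf_le
      refine ⟨n - k, by omega, by omega, ?_⟩
      have h4 : n - (n - k) = k := by omega
      rw [h4]
      zify [hk2, show k ≤ n by omega]
      ring
    · refine le_csInf ⟨_, ⟨n - k, by omega, by omega, rfl⟩⟩ ?_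
      rintro v ⟨y, hya, hyn, rfl⟩
      zify [hk2, hyn]
      nlinarith [consec_nonneg ((n : ℤ) - y - k)]
  · -- otherwise
    have h3 : 2 * n + 1 ≤ 3 * a := by
      rcases Nat.even_or_odd a with he | ho
      · have : ¬ (3 * a ≤ 2 * n) := fun h => h1 ⟨he, h⟩
        omega
      · have : ¬ (3 * a ≤ 2 * n + 1) := fun h => h2 ⟨ho, h⟩
        omega
    apply le_antisymm
    · apply Nat.sInf_le
      refine ⟨a, le_refl a, han, ?_⟩
      rw [add_comm]; ring_nf
    · refine le_csInf ⟨_, ⟨a, le_refl a, han, rfl⟩⟩ ?_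
      rintro v ⟨y, hya, hyn, rfl⟩
      zify [hyn, han]
      nlinarith [mul_nonneg (by omega : (0:ℤ) ≤ (y:ℤ) - a)
        (by omega : (0:ℤ) ≤ 2 * (a:ℤ) + y - 2 * n)]
end

section
/- Let b ≥ 0 and n ≥ 1, and let D ⊆ [0,n-1]² be a set containing at least b elements in each row and each column of the n×n grid, and such that (i,j) ∈ D whenever both row i and column j contain exactly b elements of D. Then D is a (2b+1)-dominating set of the rook's graph K_n □ K_n: every vertex (i,j) ∉ D has at least 2b+1 neighbors in D, where the neighbors of (i,j) are all points (i,k) with k ≠ j and (k,j) with k ≠ i. -/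
open Finset

/-- if `D ⊆ [0,n-1]²` has at least `b` elements in every row and every
column, and contains `(i,j)` whenever both row `i` and column `j` have exactly `b`
elements of `D`, then `D` is `(2b+1)`-dominating in the rook's graph `K_n □ K_n`. -/
theorem stmt_7 (n b : ℕ) (hn : 1 ≤ n) (D : Finset (ℕ × ℕ))
    (hD : D ⊆ Finset.range n ×ˢ Finset.range n)
    (hrow : ∀ i < n, b ≤ (D.filter (fun q => q.1 = i)).card)
    (hcol : ∀ j < n, b ≤ (D.filter (fun q => q.2 = j)).card)
    (hexact : ∀ i < n, ∀ j < n,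
      (D.filter (fun q => q.1 = i)).card = b → (D.filter (fun q => q.2 = j)).card = b →
      (i, j) ∈ D) :
    ∀ p ∈ Finset.range n ×ˢ Finset.range n, p ∉ D →
      2 * b + 1 ≤ (D.filter (fun q =>
        (q.1 = p.1 ∧ q.2 ≠ p.2) ∨ (q.2 = p.2 ∧ q.1 ≠ p.1))).card := by
  rintro ⟨i, j⟩ hp hpD
  simp only [mem_product, mem_range] at hp
  obtain ⟨hi, hj⟩ := hp
  have hrowEq : D.filter (fun q => q.1 = i ∧ q.2 ≠ j) = D.filter (fun q => q.1 = i) := by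
    apply filter_congr
    intro q hq
    constructor
    · exact fun h => h.1
    · intro h
      refine ⟨h, fun hj' => hpD ?_⟩
      have : q = (i, j) := Prod.ext h hj'
      rwa [← this]
  have hcolEq : D.filter (fun q => q.2 = j ∧ q.1 ≠ i) = D.filter (fun q => q.2 = j) := by
    apply filter_congr
    intro q hq
    constructor
    · exact fun h => h.1
    · intro h
      refine ⟨h, fun hi' => hpD ?_⟩
      have : q = (i, j) := Prod.ext hi' h
      rwa [← this]
  have hsplit : (D.filter (fun q =>
        (q.1 = (i,j).1 ∧ q.2 ≠ (i,j).2) ∨ (q.2 = (i,j).2 ∧ q.1 ≠ (i,j).1))).card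
      = (D.filter (fun q => q.1 = i)).card + (D.filter (fun q => q.2 = j)).card := by
    rw [filter_or, card_union_of_disjoint, hrowEq, hcolEq]
    rw [disjoint_filter]
    rintro q _ ⟨h1, h2⟩ ⟨h3, h4⟩
    exact h2 h3
  rw [hsplit]
  have hr := hrow i hi
  have hc := hcol j hj
  rcases lt_or_eq_of_le hr with h | h
  · omega
  rcases lt_or_eq_of_le hc with h' | h'
  · omega
  exact absurd (hexact i hi j hj h.symm h'.symm) hpD
end

section
/- Let n ≥ 1 and let b be an integer with 0 ≤ b ≤ ⌊(n−1)/2⌋. Then there exists a (2b+1)-dominating set of the rook's graph K_n □ K_n of cardinality (b+1)n − b. That is, there exists D ⊆ [0,n-1]² with |D| = (b+1)n − b such that every vertex (i,j) ∉ D has at least 2b+1 points of D in its row and column combined (excluding itself). -/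
open Finset

private lemma aux_cancel {m a t₁ t₂ : ℕ} (h1 : t₁ < m) (h2 : t₂ < m)
    (h : (a + t₁) % m = (a + t₂) % m) : t₁ = t₂ := by
  have h' : t₁ ≡ t₂ [MOD m] := Nat.ModEq.add_left_cancel' a h
  have h'' : t₁ % m = t₂ % m := h'
  rwa [Nat.mod_eq_of_lt h1, Nat.mod_eq_of_lt h2] at h''

private def rowSet (n b i : ℕ) : Finset ℕ :=
  if i < b then Finset.range b
  else (Finset.range (b+1)).image (fun t => b + ((i - b) + t) % (n - b))

private def Dset (n b : ℕ) : Finset (ℕ × ℕ) :=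
  (Finset.range n).biUnion (fun i => {i} ×ˢ rowSet n b i)

private lemma mem_Dset {n b i j : ℕ} :
    (i, j) ∈ Dset n b ↔ i < n ∧ j ∈ rowSet n b i := by
  simp only [Dset, mem_biUnion, mem_product, mem_singleton, mem_range]
  constructor
  · rintro ⟨a, ha, rfl, hj⟩; exact ⟨ha, hj⟩
  · rintro ⟨hi, hj⟩; exact ⟨i, hi, rfl, hj⟩

private lemma mem_rowSet_lt {n b i j : ℕ} (hi : i < b) :
    j ∈ rowSet n b i ↔ j < b := by
  unfold rowSet; rw [if_pos hi, mem_range]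

private lemma mem_rowSet_ge {n b i j : ℕ} (hi : b ≤ i) :
    j ∈ rowSet n b i ↔ ∃ t, t < b + 1 ∧ b + ((i - b) + t) % (n - b) = j := by
  unfold rowSet
  rw [if_neg (by omega)]
  simp only [mem_image, mem_range]

private lemma rowSet_card {n b i : ℕ} (hm : b + 1 ≤ n - b) :
    (rowSet n b i).card = if i < b then b else b + 1 := by
  unfold rowSet
  split
  · exact Finset.card_range b
  · rw [Finset.card_image_of_injOn, Finset.card_range]
    intro t₁ h₁ t₂ h₂ h
    simp only [mem_coe, mem_range] at h₁ h₂
    dsimp only at h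
    have h' : ((i - b) + t₁) % (n - b) = ((i - b) + t₂) % (n - b) := by omega
    exact aux_cancel (by omega) (by omega) h'

private lemma row_filter {n b i : ℕ} (hi : i < n) :
    (Dset n b).filter (fun q => q.1 = i) = {i} ×ˢ rowSet n b i := by
  ext ⟨a, c⟩
  simp only [mem_filter, mem_product, mem_singleton, mem_Dset]
  constructor
  · rintro ⟨⟨_, hc⟩, rfl⟩; exact ⟨rfl, hc⟩
  · rintro ⟨rfl, hc⟩; exact ⟨⟨hi, hc⟩, rfl⟩

private lemma col_filter_lt {n b j : ℕ} (hbn : b ≤ n) (hj : j < b) :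
    (Dset n b).filter (fun q => q.2 = j) = (Finset.range b).image (fun i => (i, j)) := by
  ext ⟨a, c⟩
  simp only [mem_filter, mem_image, mem_range, Prod.mk.injEq]
  constructor
  · rintro ⟨hD, rfl⟩
    rw [mem_Dset] at hD
    obtain ⟨ha, hc⟩ := hD
    refine ⟨a, ?_, rfl, rfl⟩
    by_contra hab
    rw [mem_rowSet_ge (by omega)] at hc
    obtain ⟨t, ht, hte⟩ := hc
    omega
  · rintro ⟨x, hx, rfl, rfl⟩
    refine ⟨mem_Dset.2 ⟨by omega, ?_⟩, rfl⟩
    rw [mem_rowSet_lt hx]; exact hj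

private lemma col_filter_ge {n b j : ℕ} (hm : b + 1 ≤ n - b) (hbj : b ≤ j) (hj : j < n) :
    (Dset n b).filter (fun q => q.2 = j) =
      (Finset.range (b+1)).image
        (fun t => (b + ((j - b) + 1 + ((n - b) - 1 - t)) % (n - b), j)) := by
  have hmpos : 0 < n - b := by omega
  have hy : j - b < n - b := by omega
  ext ⟨a, c⟩
  simp only [mem_filter, mem_image, mem_range, Prod.mk.injEq]
  constructor
  · rintro ⟨hD, hcj⟩
    rw [mem_Dset] at hD
    obtain ⟨ha, hc⟩ := hD
    have hab : b ≤ a := by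
      by_contra hab
      rw [mem_rowSet_lt (by omega)] at hc
      omega
    rw [mem_rowSet_ge hab] at hc
    obtain ⟨t, ht, hte⟩ := hc
    refine ⟨t, ht, ?_, hcj.symm⟩
    have hx : a - b < n - b := by omega
    have hmod : ((a - b) + t) % (n - b) = j - b := by omega
    have key : ((j - b) + 1 + ((n - b) - 1 - t)) % (n - b) = a - b := by
      rw [← hmod, add_assoc, Nat.mod_add_mod]
      have : (a - b) + t + (1 + ((n - b) - 1 - t)) = (a - b) + (n - b) := by omega
      rw [this, Nat.add_mod_right, Nat.mod_eq_of_lt hx]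
    omega
  · rintro ⟨t, ht, rfl, rfl⟩
    refine ⟨mem_Dset.2 ⟨?_, ?_⟩, rfl⟩
    · have : ((j - b) + 1 + ((n - b) - 1 - t)) % (n - b) < n - b := Nat.mod_lt _ hmpos
      omega
    · rw [mem_rowSet_ge (by omega)]
      refine ⟨t, ht, ?_⟩
      have h1 : b + ((j - b) + 1 + ((n - b) - 1 - t)) % (n - b) - b
          = ((j - b) + 1 + ((n - b) - 1 - t)) % (n - b) := by omega
      rw [h1, Nat.mod_add_mod]
      have : (j - b) + 1 + ((n - b) - 1 - t) + t = (j - b) + (n - b) := by omega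
      rw [this, Nat.add_mod_right, Nat.mod_eq_of_lt hy]
      omega

private lemma col_filter_ge_card {n b j : ℕ} (hm : b + 1 ≤ n - b) (hbj : b ≤ j) (hj : j < n) :
    ((Dset n b).filter (fun q => q.2 = j)).card = b + 1 := by
  rw [col_filter_ge hm hbj hj, Finset.card_image_of_injOn, Finset.card_range]
  intro t₁ h₁ t₂ h₂ h
  simp only [mem_coe, mem_range, Prod.mk.injEq] at h₁ h₂ h
  have h' : ((j - b) + 1 + ((n - b) - 1 - t₁)) % (n - b)
      = ((j - b) + 1 + ((n - b) - 1 - t₂)) % (n - b) := by omega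
  have := aux_cancel (m := n - b) (a := (j - b) + 1)
    (t₁ := (n - b) - 1 - t₁) (t₂ := (n - b) - 1 - t₂) (by omega) (by omega) h'
  omega

/-- there exists a `(2b+1)`-dominating set of the rook's graph
`K_n □ K_n` of cardinality `(b+1)n − b`, provided `0 ≤ b ≤ ⌊(n−1)/2⌋`. -/
theorem stmt_8 (n b : ℕ) (hn : 1 ≤ n) (hb : b ≤ (n - 1) / 2) :
    ∃ D : Finset (ℕ × ℕ), D ⊆ Finset.range n ×ˢ Finset.range n ∧
      D.card = (b + 1) * n - b ∧
      ∀ p ∈ Finset.range n ×ˢ Finset.range n, p ∉ D →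
        2 * b + 1 ≤ (D.filter (fun q =>
          (q.1 = p.1 ∧ q.2 ≠ p.2) ∨ (q.2 = p.2 ∧ q.1 ≠ p.1))).card := by
  have hm : b + 1 ≤ n - b := by omega
  have hmpos : 0 < n - b := by omega
  have hbn : b < n := by omega
  refine ⟨Dset n b, ?_, ?_, ?_⟩
  · -- subset
    intro q hq
    obtain ⟨i, j⟩ := q
    rw [mem_Dset] at hq
    obtain ⟨hi, hj⟩ := hq
    rw [mem_product, mem_range, mem_range]
    refine ⟨hi, ?_⟩
    rcases lt_or_ge i b with h | h
    · rw [mem_rowSet_lt h] at hj; omega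
    · rw [mem_rowSet_ge h] at hj
      obtain ⟨t, ht, rfl⟩ := hj
      have : ((i - b) + t) % (n - b) < n - b := Nat.mod_lt _ hmpos
      omega
  · -- cardinality
    rw [Dset, Finset.card_biUnion]
    · have h0 : ∀ i ∈ Finset.range n,
          ({i} ×ˢ rowSet n b i).card = if i < b then b else b + 1 := by
        intro i _
        rw [Finset.card_product, Finset.card_singleton, one_mul, rowSet_card hm]
      rw [Finset.sum_congr rfl h0, Finset.sum_ite, Finset.sum_const, Finset.sum_const]
      have h1 : (Finset.filter (fun i => i < b) (Finset.range n)) = Finset.range b := by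
        ext x; simp only [mem_filter, mem_range]; omega
      have h2 : (Finset.filter (fun i => ¬ i < b) (Finset.range n)).card = n - b := by
        have := Finset.card_filter_add_card_filter_not
          (s := Finset.range n) (p := fun i => i < b)
        rw [h1] at this
        simp only [Finset.card_range] at this ⊢
        omega
      rw [h1, h2, Finset.card_range, smul_eq_mul, smul_eq_mul]
      obtain ⟨k, rfl⟩ : ∃ k, n = b + k := ⟨n - b, by omega⟩
      have hk : b + k - b = k := by omega
      rw [hk]
      have : (b + 1) * (b + k) = b * b + k * (b + 1) + b := by ring
      omega
    · intro x _ y _ hxy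
      simp only [Finset.disjoint_left]
      rintro ⟨a, c⟩ h1 h2
      rw [mem_product, mem_singleton] at h1 h2
      exact hxy (h1.1 ▸ h2.1 ▸ rfl)
  · -- domination
    rintro ⟨i, j⟩ hp hpD
    rw [mem_product, mem_range, mem_range] at hp
    obtain ⟨hi, hj⟩ := hp
    have key1 : ∀ q ∈ Dset n b, q.1 = i → q.2 ≠ j := by
      rintro ⟨a, c⟩ hq rfl rfl; exact hpD hq
    have key2 : ∀ q ∈ Dset n b, q.2 = j → q.1 ≠ i := by
      rintro ⟨a, c⟩ hq rfl rfl; exact hpD hq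
    have hsplit : (Dset n b).filter (fun q =>
          (q.1 = (i, j).1 ∧ q.2 ≠ (i, j).2) ∨ (q.2 = (i, j).2 ∧ q.1 ≠ (i, j).1)) =
        (Dset n b).filter (fun q => q.1 = i) ∪ (Dset n b).filter (fun q => q.2 = j) := by
      ext q
      simp only [mem_filter, mem_union]
      constructor
      · rintro ⟨hq, h | h⟩
        · exact Or.inl ⟨hq, h.1⟩
        · exact Or.inr ⟨hq, h.1⟩
      · rintro (⟨hq, h⟩ | ⟨hq, h⟩)
        · exact ⟨hq, Or.inl ⟨h, key1 q hq h⟩⟩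
        · exact ⟨hq, Or.inr ⟨h, key2 q hq h⟩⟩
    have hdisj : Disjoint ((Dset n b).filter (fun q => q.1 = i))
        ((Dset n b).filter (fun q => q.2 = j)) := by
      simp only [Finset.disjoint_left]
      rintro ⟨a, c⟩ h1 h2
      rw [mem_filter] at h1 h2
      exact key1 _ h1.1 h1.2 h2.2
    rw [hsplit, Finset.card_union_of_disjoint hdisj]
    have hrow : ((Dset n b).filter (fun q => q.1 = i)).card = if i < b then b else b + 1 := by
      rw [row_filter hi, Finset.card_product, Finset.card_singleton, one_mul, rowSet_card hm]
    rcases lt_or_ge j b with hjb | hjb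
    · -- column has b; then i ≥ b (else p ∈ D)
      have hib : b ≤ i := by
        by_contra hib
        exact hpD (mem_Dset.2 ⟨hi, (mem_rowSet_lt (by omega)).2 hjb⟩)
      have hcol : ((Dset n b).filter (fun q => q.2 = j)).card = b := by
        rw [col_filter_lt (le_of_lt hbn) hjb, Finset.card_image_of_injOn, Finset.card_range]
        intro x _ y _ h
        simpa using congrArg Prod.fst h
      rw [hrow, hcol, if_neg (by omega)]
      omega
    · have hcol := col_filter_ge_card hm hjb hj
      rw [hrow, hcol]
      split <;> omega
end

section
/- Let n ≥ 1 and let b be an integer with 0 ≤ b ≤ ⌊(n−1)/2⌋. Then every (2b+1)-dominating set of the rook's graph K_n □ K_n has cardinality at least (b+1)n − b. That is, if D ⊆ [0,n-1]² is such that every vertex (i,j) ∉ D has at least 2b+1 points of D in its row and column combined (excluding itself), then |D| ≥ (b+1)n − b. -/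
/-!
Let `r` be the least number of points of `D` on a row or column; after transposing, a row `i₀`
attains it. If `r > b`, every row carries at least `b + 1` points. Otherwise each of the `a ≤ r`
columns meeting row `i₀` inside `D` carries at least `r` points, and each of the other `n - a`
columns meets row `i₀` in a vertex outside `D`, so it carries at least `2b + 1 - r` points. Hence
`|D| ≥ a r + (n - a)(2b + 1 - r) ≥ r² + (n - r)(2b + 1 - r)`, which exceeds `(b + 1)n - b` by
`(b - r)(n - 2r + 1) ≥ 0`.
-/

open Finset

namespace RookDomination

def rowCard (D : Finset (ℕ × ℕ)) (i : ℕ) : ℕ := #{q ∈ D | q.1 = i}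

def colCard (D : Finset (ℕ × ℕ)) (j : ℕ) : ℕ := #{q ∈ D | q.2 = j}

variable {D : Finset (ℕ × ℕ)}

theorem card_eq_sum_rowCard {s t : Finset ℕ} (hD : D ⊆ s ×ˢ t) :
    #D = ∑ i ∈ s, rowCard D i :=
  card_eq_sum_card_fiberwise fun _ hp => (mem_product.1 (hD hp)).1

theorem card_eq_sum_colCard {s t : Finset ℕ} (hD : D ⊆ s ×ˢ t) :
    #D = ∑ j ∈ t, colCard D j :=
  card_eq_sum_card_fiberwise fun _ hp => (mem_product.1 (hD hp)).2

theorem rowCard_image_swap (i : ℕ) : rowCard (D.image Prod.swap) i = colCard D i := by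
  rw [rowCard, colCard, filter_image, card_image_of_injective _ Prod.swap_injective]
  rfl

theorem colCard_image_swap (j : ℕ) : colCard (D.image Prod.swap) j = rowCard D j := by
  rw [rowCard, colCard, filter_image, card_image_of_injective _ Prod.swap_injective]
  rfl

theorem card_rookNeighbors_le (p : ℕ × ℕ) :
    #{q ∈ D | (q.1 = p.1 ∧ q.2 ≠ p.2) ∨ (q.2 = p.2 ∧ q.1 ≠ p.1)}
      ≤ rowCard D p.1 + colCard D p.2 :=
  calc _ ≤ #({q ∈ D | q.1 = p.1} ∪ {q ∈ D | q.2 = p.2}) := by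
        apply card_le_card
        intro q
        simp only [mem_filter, mem_union]
        tauto
    _ ≤ _ := card_union_le _ _

theorem card_filter_mem_le_rowCard (i : ℕ) (s : Finset ℕ) :
    #{j ∈ s | (i, j) ∈ D} ≤ rowCard D i :=
  card_le_card_of_injOn (fun j => (i, j)) (fun j hj => by simp_all)
    fun _ _ _ _ h => (Prod.mk.inj h).2

theorem succ_mul_sub_le_mul_add_mul {a r b n : ℕ} (har : a ≤ r) (hrb : r ≤ b)
    (hbn : 2 * b + 1 ≤ n) :
    (b + 1) * n - b ≤ a * r + (n - a) * (2 * b + 1 - r) := by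
  have han : a ≤ n := by omega
  have hr : r ≤ 2 * b + 1 := by omega
  have hb : b ≤ (b + 1) * n := by nlinarith
  zify [han, hr, hb]
  nlinarith [mul_nonneg (by omega : (0 : ℤ) ≤ n - (2 * b + 1)) (by omega : (0 : ℤ) ≤ b - r),
    mul_nonneg (by omega : (0 : ℤ) ≤ r - a) (by omega : (0 : ℤ) ≤ 2 * b + 1 - 2 * r)]

theorem le_card_of_rowCard_le {n b i : ℕ} (hD : D ⊆ range n ×ˢ range n)
    (hbn : 2 * b + 1 ≤ n) (hib : rowCard D i ≤ b)
    (hcol : ∀ j < n, rowCard D i ≤ colCard D j)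
    (hline : ∀ j < n, (i, j) ∉ D → 2 * b + 1 ≤ rowCard D i + colCard D j) :
    (b + 1) * n - b ≤ #D := by
  set A := {j ∈ range n | (i, j) ∈ D}
  set B := {j ∈ range n | (i, j) ∉ D}
  have hAB : #A + #B = n := by
    rw [card_filter_add_card_filter_not, card_range]
  have hA : #A * rowCard D i ≤ ∑ j ∈ A, colCard D j := by
    rw [← smul_eq_mul, ← sum_const]
    exact sum_le_sum fun j hj => hcol j (mem_range.1 (mem_filter.1 hj).1)
  have hB : #B * (2 * b + 1 - rowCard D i) ≤ ∑ j ∈ B, colCard D j := by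
    rw [← smul_eq_mul, ← sum_const]
    refine sum_le_sum fun j hj => ?_
    obtain ⟨hj, hjD⟩ := mem_filter.1 hj
    have := hline j (mem_range.1 hj) hjD
    omega
  have hsum : ∑ j ∈ A, colCard D j + ∑ j ∈ B, colCard D j = #D := by
    rw [sum_filter_add_sum_filter_not, card_eq_sum_colCard hD]
  have hbound := succ_mul_sub_le_mul_add_mul (a := #A) (card_filter_mem_le_rowCard i _) hib hbn
  rw [show n - #A = #B by omega] at hbound
  omega

theorem le_card_of_isMin_rowCard {n b i : ℕ} (hD : D ⊆ range n ×ˢ range n)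
    (hbn : 2 * b + 1 ≤ n)
    (hrow : ∀ i' < n, rowCard D i ≤ rowCard D i')
    (hcol : ∀ j < n, rowCard D i ≤ colCard D j)
    (hline : ∀ i' < n, ∀ j < n, (i', j) ∉ D → 2 * b + 1 ≤ rowCard D i' + colCard D j)
    (hi : i < n) :
    (b + 1) * n - b ≤ #D := by
  rcases le_or_gt (rowCard D i) b with hib | hbi
  · exact le_card_of_rowCard_le hD hbn hib hcol (hline i hi)
  · calc (b + 1) * n - b ≤ ∑ _i' ∈ range n, (b + 1) := by simp [mul_comm]
      _ ≤ ∑ i' ∈ range n, rowCard D i' :=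
        sum_le_sum fun i' hi' => hbi.trans_le (hrow i' (mem_range.1 hi'))
      _ = #D := (card_eq_sum_rowCard hD).symm

end RookDomination

open RookDomination

theorem stmt_9_general (n b : ℕ) (hb : b ≤ (n - 1) / 2)
    (D : Finset (ℕ × ℕ)) (hD : D ⊆ Finset.range n ×ˢ Finset.range n)
    (hdom : ∀ p ∈ Finset.range n ×ˢ Finset.range n, p ∉ D →
      2 * b + 1 ≤ (D.filter (fun q =>
        (q.1 = p.1 ∧ q.2 ≠ p.2) ∨ (q.2 = p.2 ∧ q.1 ≠ p.1))).card) :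
    (b + 1) * n - b ≤ D.card := by
  rcases Nat.eq_zero_or_pos n with rfl | hn
  · simp
  have hbn : 2 * b + 1 ≤ n := by omega
  have hline : ∀ i < n, ∀ j < n, (i, j) ∉ D → 2 * b + 1 ≤ rowCard D i + colCard D j :=
    fun i hi j hj hij =>
      (hdom (i, j) (mem_product.2 ⟨mem_range.2 hi, mem_range.2 hj⟩) hij).trans
        (card_rookNeighbors_le (i, j))
  obtain ⟨i, hi, hrow⟩ := exists_min_image (range n) (rowCard D) ⟨0, mem_range.2 hn⟩
  obtain ⟨j, hj, hcol⟩ := exists_min_image (range n) (colCard D) ⟨0, mem_range.2 hn⟩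
  rcases le_total (rowCard D i) (colCard D j) with hij | hji
  · exact le_card_of_isMin_rowCard hD hbn (fun i' hi' => hrow i' (mem_range.2 hi'))
      (fun j' hj' => hij.trans (hcol j' (mem_range.2 hj'))) hline (mem_range.1 hi)
  · have hD' : D.image Prod.swap ⊆ range n ×ˢ range n :=
      (image_subset_image hD).trans (image_swap_product _ _).le
    rw [← card_image_of_injective D Prod.swap_injective]
    refine le_card_of_isMin_rowCard hD' hbn (i := j) (fun i' hi' => ?_) (fun j' hj' => ?_)
      (fun i' hi' j' hj' hij' => ?_) (mem_range.1 hj)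
    · simpa only [rowCard_image_swap] using hcol i' (mem_range.2 hi')
    · simpa only [rowCard_image_swap, colCard_image_swap] using
        hji.trans (hrow j' (mem_range.2 hj'))
    · rw [rowCard_image_swap, colCard_image_swap]
      exact (hline j' hj' i' hi' fun h => hij' (mem_image_of_mem Prod.swap h)).trans_eq
        (add_comm _ _)

/-- every `(2b+1)`-dominating set of the rook's graph `K_n □ K_n`
has cardinality at least `(b+1)n − b`, provided `0 ≤ b ≤ ⌊(n−1)/2⌋`. -/
theorem stmt_9 (n b : ℕ) (hn : 1 ≤ n) (hb : b ≤ (n - 1) / 2)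
    (D : Finset (ℕ × ℕ)) (hD : D ⊆ Finset.range n ×ˢ Finset.range n)
    (hdom : ∀ p ∈ Finset.range n ×ˢ Finset.range n, p ∉ D →
      2 * b + 1 ≤ (D.filter (fun q =>
        (q.1 = p.1 ∧ q.2 ≠ p.2) ∨ (q.2 = p.2 ∧ q.1 ≠ p.1))).card) :
    (b + 1) * n - b ≤ D.card :=
  stmt_9_general n b hb D hD hdom
end

section
/- Let n ≥ 2 and let a be an even integer with 1 ≤ a ≤ 2n−2. Then the minimum cardinality of an a-dominating set of the rook's graph K_n □ K_n equals an/2: there exists D ⊆ [0,n-1]² of size an/2 such that every vertex not in D has at least a neighbors in D, and no smaller set has this property. -/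
open Finset

private lemma aux_mod_inv_left (n i m : ℕ) (hn : 0 < n) (hm : m < n) :
    (i + (m + (n - i % n)) % n) % n = m := by
  rw [Nat.add_mod_mod]
  have h1 : i % n < n := Nat.mod_lt _ hn
  have h2 : n * (i / n) + i % n = i := Nat.div_add_mod i n
  have h3 : i + (m + (n - i % n)) = m + (i / n) * n + n := by
    have : (i / n) * n = n * (i / n) := Nat.mul_comm _ _
    omega
  rw [h3, Nat.add_mod_right, Nat.add_mul_mod_self_right, Nat.mod_eq_of_lt hm]

private lemma aux_mod_inv_right (n i k : ℕ) (hn : 0 < n) (hk : k < n) :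
    ((i + k) % n + (n - i % n)) % n = k := by
  rw [Nat.mod_add_mod]
  have h1 : i % n < n := Nat.mod_lt _ hn
  have h2 : n * (i / n) + i % n = i := Nat.div_add_mod i n
  have h3 : i + k + (n - i % n) = k + (i / n) * n + n := by
    have : (i / n) * n = n * (i / n) := Nat.mul_comm _ _
    omega
  rw [h3, Nat.add_mod_right, Nat.add_mul_mod_self_right, Nat.mod_eq_of_lt hk]

private lemma aux_row_count (n b i : ℕ) (hn : 0 < n) (hb : b ≤ n) :
    (((Finset.range n)).filter (fun k => (i + k) % n < b)).card = b := by
  have h : (((Finset.range n)).filter (fun k => (i + k) % n < b)).card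
      = (((Finset.range n)).filter (fun k => k < b)).card := by
    apply Finset.card_bij' (fun k _ => (i + k) % n)
      (fun m _ => (m + (n - i % n)) % n)
    · intro k hk
      simp only [mem_filter, mem_range] at hk ⊢
      exact ⟨Nat.mod_lt _ hn, hk.2⟩
    · intro m hm
      simp only [mem_filter, mem_range] at hm ⊢
      refine ⟨Nat.mod_lt _ hn, ?_⟩
      rw [aux_mod_inv_left n i m hn hm.1]
      exact hm.2
    · intro k hk
      simp only [mem_filter, mem_range] at hk
      exact aux_mod_inv_right n i k hn hk.1
    · intro m hm
      simp only [mem_filter, mem_range] at hm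
      exact aux_mod_inv_left n i m hn hm.1
  rw [h]
  have : ((Finset.range n).filter (fun k => k < b)) = Finset.range b := by
    ext x; simp only [mem_filter, mem_range]; omega
  rw [this, card_range]

/-- Fiber of a subset of the grid over a row index. -/
private lemma aux_fiber_fst (n : ℕ) (D : Finset (ℕ × ℕ))
    (hD : D ⊆ Finset.range n ×ˢ Finset.range n) (i : ℕ) :
    (((Finset.range n)).filter (fun j => (i, j) ∈ D)).card
      = (D.filter (fun q => q.1 = i)).card := by
  apply Finset.card_bij' (fun j _ => (i, j)) (fun q _ => q.2)
  · intro j hj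
    exact mem_filter.2 ⟨(mem_filter.1 hj).2, rfl⟩
  · intro q hq
    have hq' := mem_filter.1 hq
    have hq2 : q.2 ∈ Finset.range n := (Finset.mem_product.1 (hD hq'.1)).2
    refine mem_filter.2 ⟨hq2, ?_⟩
    have : (i, q.2) = q := by rw [← hq'.2]
    rw [this]; exact hq'.1
  · intro j _; rfl
  · intro q hq
    have hq' := mem_filter.1 hq
    rw [← hq'.2]

private lemma aux_fiber_snd (n : ℕ) (D : Finset (ℕ × ℕ))
    (hD : D ⊆ Finset.range n ×ˢ Finset.range n) (j : ℕ) :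
    (((Finset.range n)).filter (fun i => (i, j) ∈ D)).card
      = (D.filter (fun q => q.2 = j)).card := by
  apply Finset.card_bij' (fun i _ => (i, j)) (fun q _ => q.1)
  · intro i hi
    exact mem_filter.2 ⟨(mem_filter.1 hi).2, rfl⟩
  · intro q hq
    have hq' := mem_filter.1 hq
    have hq1 : q.1 ∈ Finset.range n := (Finset.mem_product.1 (hD hq'.1)).1
    refine mem_filter.2 ⟨hq1, ?_⟩
    have : (q.1, j) = q := by rw [← hq'.2]
    rw [this]; exact hq'.1
  · intro i _; rfl
  · intro q hq
    have hq' := mem_filter.1 hq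
    rw [← hq'.2]

/-- for even `a` with `1 ≤ a ≤ 2n−2` and `n ≥ 2`, the minimum size of
an `a`-dominating set of the rook's graph `K_n □ K_n` equals `an/2`. -/
theorem stmt_10 (n a : ℕ) (hn : 2 ≤ n) (ha1 : 1 ≤ a) (ha2 : a ≤ 2 * n - 2)
    (haeven : Even a) :
    sInf {k : ℕ | ∃ D : Finset (ℕ × ℕ), D ⊆ Finset.range n ×ˢ Finset.range n ∧
      D.card = k ∧
      ∀ p ∈ Finset.range n ×ˢ Finset.range n, p ∉ D →
        a ≤ (D.filter (fun q =>
          (q.1 = p.1 ∧ q.2 ≠ p.2) ∨ (q.2 = p.2 ∧ q.1 ≠ p.1))).card} =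
    a * n / 2 := by
  obtain ⟨b, hab⟩ := haeven
  have hab' : a = 2 * b := by omega
  have hb1 : 1 ≤ b := by omega
  have hbn : b ≤ n - 1 := by omega
  have hn0 : 0 < n := by omega
  have hrhs : a * n / 2 = b * n := by
    rw [hab', Nat.mul_assoc]
    exact Nat.mul_div_cancel_left _ (by norm_num)
  rw [hrhs]
  set S := Finset.range n ×ˢ Finset.range n with hS
  set D₀ := S.filter (fun p => (p.1 + p.2) % n < b) with hD₀
  have hD₀S : D₀ ⊆ S := filter_subset _ _
  have hrow : ∀ i ∈ Finset.range n, (D₀.filter (fun q => q.1 = i)).card = b := by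
    intro i hi
    rw [← aux_fiber_fst n D₀ hD₀S i]
    have heq : ((Finset.range n).filter (fun j => (i, j) ∈ D₀))
        = (Finset.range n).filter (fun j => (i + j) % n < b) := by
      apply filter_congr
      intro j hj
      simp only [hD₀, hS, mem_filter, Finset.mem_product, mem_range] at hj ⊢
      simp only [mem_range] at hi
      constructor
      · rintro ⟨_, h⟩; exact h
      · intro h; exact ⟨⟨hi, hj⟩, h⟩
    rw [heq, aux_row_count n b i hn0 (by omega)]
  have hcol : ∀ j ∈ Finset.range n, (D₀.filter (fun q => q.2 = j)).card = b := by
    intro j hj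
    rw [← aux_fiber_snd n D₀ hD₀S j]
    have heq : ((Finset.range n).filter (fun i => (i, j) ∈ D₀))
        = (Finset.range n).filter (fun i => (j + i) % n < b) := by
      apply filter_congr
      intro i hi
      simp only [hD₀, hS, mem_filter, Finset.mem_product, mem_range] at hi ⊢
      simp only [mem_range] at hj
      rw [Nat.add_comm j i]
      constructor
      · rintro ⟨_, h⟩; exact h
      · intro h; exact ⟨⟨hi, hj⟩, h⟩
    rw [heq, aux_row_count n b j hn0 (by omega)]
  have hD₀card : D₀.card = b * n := by
    rw [Finset.card_eq_sum_card_fiberwise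
      (f := Prod.fst) (t := Finset.range n)
      (fun x hx => (Finset.mem_product.1 (hD₀S hx)).1)]
    rw [Finset.sum_congr rfl hrow, Finset.sum_const, card_range, smul_eq_mul,
      Nat.mul_comm]
  have hmem : b * n ∈ {k : ℕ | ∃ D : Finset (ℕ × ℕ), D ⊆ Finset.range n ×ˢ Finset.range n ∧
      D.card = k ∧
      ∀ p ∈ Finset.range n ×ˢ Finset.range n, p ∉ D →
        a ≤ (D.filter (fun q =>
          (q.1 = p.1 ∧ q.2 ≠ p.2) ∨ (q.2 = p.2 ∧ q.1 ≠ p.1))).card} := by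
    refine ⟨D₀, hD₀S, hD₀card, ?_⟩
    intro p hp hpD
    have hpb : b ≤ (p.1 + p.2) % n := by
      by_contra h
      exact hpD (Finset.mem_filter.2 ⟨hp, by omega⟩)
    have hsplit : D₀.filter (fun q =>
        (q.1 = p.1 ∧ q.2 ≠ p.2) ∨ (q.2 = p.2 ∧ q.1 ≠ p.1))
        = (D₀.filter (fun q => q.1 = p.1)) ∪ (D₀.filter (fun q => q.2 = p.2)) := by
      rw [← Finset.filter_or]
      apply filter_congr
      intro q hq
      have hqb : (q.1 + q.2) % n < b := (Finset.mem_filter.1 hq).2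
      constructor
      · rintro (⟨h, _⟩ | ⟨h, _⟩)
        · exact Or.inl h
        · exact Or.inr h
      · rintro (h | h)
        · refine Or.inl ⟨h, fun h2 => ?_⟩
          rw [h, h2] at hqb; omega
        · refine Or.inr ⟨h, fun h1 => ?_⟩
          rw [h, h1] at hqb; omega
    rw [hsplit]
    have hdisj : Disjoint (D₀.filter (fun q => q.1 = p.1))
        (D₀.filter (fun q => q.2 = p.2)) := by
      rw [Finset.disjoint_left]
      intro q hq1 hq2
      have h1 := Finset.mem_filter.1 hq1
      have h2 := Finset.mem_filter.1 hq2
      have hqb : (q.1 + q.2) % n < b := (Finset.mem_filter.1 h1.1).2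
      rw [h1.2, h2.2] at hqb
      omega
    rw [Finset.card_union_of_disjoint hdisj]
    have hp1 : p.1 ∈ Finset.range n := (Finset.mem_product.1 hp).1
    have hp2 : p.2 ∈ Finset.range n := (Finset.mem_product.1 hp).2
    rw [hrow p.1 hp1, hcol p.2 hp2]
    omega
  apply le_antisymm
  · exact Nat.sInf_le hmem
  · apply le_csInf ⟨b * n, hmem⟩
    rintro k ⟨D, hDS, hcard, hdom⟩
    subst hcard
    set r : ℕ → ℕ := fun i => (D.filter (fun q => q.1 = i)).card with hr
    set c : ℕ → ℕ := fun j => (D.filter (fun q => q.2 = j)).card with hc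
    have hrsum : ∑ i ∈ Finset.range n, r i = D.card :=
      (Finset.card_eq_sum_card_fiberwise
        (f := Prod.fst) (t := Finset.range n)
        (fun x hx => (Finset.mem_product.1 (hDS hx)).1)).symm
    have hcsum : ∑ j ∈ Finset.range n, c j = D.card :=
      (Finset.card_eq_sum_card_fiberwise
        (f := Prod.snd) (t := Finset.range n)
        (fun x hx => (Finset.mem_product.1 (hDS hx)).2)).symm
    have hrsumZ : ∑ i ∈ Finset.range n, (r i : ℤ) = (D.card : ℤ) := by
      exact_mod_cast hrsum
    have hcsumZ : ∑ j ∈ Finset.range n, (c j : ℤ) = (D.card : ℤ) := by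
      exact_mod_cast hcsum
    have hkey : ∀ p ∈ S \ D, (a : ℤ) ≤ (r p.1 : ℤ) + (c p.2 : ℤ) := by
      intro p hp
      have hpS : p ∈ S := (Finset.mem_sdiff.1 hp).1
      have hpD : p ∉ D := (Finset.mem_sdiff.1 hp).2
      have h := hdom p hpS hpD
      have hsub : D.filter (fun q =>
          (q.1 = p.1 ∧ q.2 ≠ p.2) ∨ (q.2 = p.2 ∧ q.1 ≠ p.1))
          ⊆ (D.filter (fun q => q.1 = p.1)) ∪ (D.filter (fun q => q.2 = p.2)) := by
        intro q hq
        have hq' := Finset.mem_filter.1 hq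
        rcases hq'.2 with ⟨h1, _⟩ | ⟨h1, _⟩
        · exact Finset.mem_union_left _ (Finset.mem_filter.2 ⟨hq'.1, h1⟩)
        · exact Finset.mem_union_right _ (Finset.mem_filter.2 ⟨hq'.1, h1⟩)
      have h2 : a ≤ r p.1 + c p.2 :=
        le_trans h (le_trans (Finset.card_le_card hsub)
          (Finset.card_union_le _ _))
      exact_mod_cast h2
    have hsum1 : (a : ℤ) * ((S \ D).card : ℤ)
        ≤ ∑ p ∈ S \ D, ((r p.1 : ℤ) + (c p.2 : ℤ)) := by
      have := Finset.card_nsmul_le_sum (S \ D)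
        (fun p => (r p.1 : ℤ) + (c p.2 : ℤ)) (a : ℤ) hkey
      simpa [nsmul_eq_mul, mul_comm] using this
    have hcardS : S.card = n * n := by
      rw [hS, Finset.card_product, card_range]
    have hDle : D.card ≤ n * n := by
      rw [← hcardS]; exact Finset.card_le_card hDS
    have hcardSD : ((S \ D).card : ℤ) = (n : ℤ) * n - (D.card : ℤ) := by
      rw [Finset.card_sdiff_of_subset hDS, hcardS, Nat.cast_sub hDle]
      push_cast
      ring
    have hsplitsum : ∑ p ∈ S \ D, ((r p.1 : ℤ) + (c p.2 : ℤ))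
        = (∑ p ∈ S, ((r p.1 : ℤ) + (c p.2 : ℤ)))
          - ∑ p ∈ D, ((r p.1 : ℤ) + (c p.2 : ℤ)) :=
      Finset.sum_sdiff_eq_sub hDS
    have hsumS : ∑ p ∈ S, ((r p.1 : ℤ) + (c p.2 : ℤ))
        = 2 * (n : ℤ) * (D.card : ℤ) := by
      rw [hS, Finset.sum_product]
      have step : ∀ x ∈ Finset.range n,
          ∑ y ∈ Finset.range n, ((r x : ℤ) + (c y : ℤ))
            = (n : ℤ) * (r x : ℤ) + (D.card : ℤ) := by
        intro x _
        rw [Finset.sum_add_distrib, Finset.sum_const, card_range,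
          nsmul_eq_mul, hcsumZ]
      rw [Finset.sum_congr rfl step, Finset.sum_add_distrib,
        ← Finset.mul_sum, hrsumZ, Finset.sum_const, card_range, nsmul_eq_mul]
      ring
    have hsumD : ∑ p ∈ D, ((r p.1 : ℤ) + (c p.2 : ℤ))
        = (∑ i ∈ Finset.range n, (r i : ℤ) ^ 2)
          + ∑ j ∈ Finset.range n, (c j : ℤ) ^ 2 := by
      rw [Finset.sum_add_distrib]
      congr 1
      · rw [← Finset.sum_fiberwise_of_maps_to (g := Prod.fst)
          (t := Finset.range n)
          (fun x hx => (Finset.mem_product.1 (hDS hx)).1)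
          (fun p => (r p.1 : ℤ))]
        apply Finset.sum_congr rfl
        intro i _
        have inner : ∀ p ∈ D.filter (fun q => q.1 = i), (r p.1 : ℤ) = (r i : ℤ) := by
          intro p hp
          rw [(Finset.mem_filter.1 hp).2]
        rw [Finset.sum_congr rfl inner, Finset.sum_const, nsmul_eq_mul]
        have : (D.filter (fun q => q.1 = i)).card = r i := rfl
        rw [this]; ring
      · rw [← Finset.sum_fiberwise_of_maps_to (g := Prod.snd)
          (t := Finset.range n)
          (fun x hx => (Finset.mem_product.1 (hDS hx)).2)
          (fun p => (c p.2 : ℤ))]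
        apply Finset.sum_congr rfl
        intro j _
        have inner : ∀ p ∈ D.filter (fun q => q.2 = j), (c p.2 : ℤ) = (c j : ℤ) := by
          intro p hp
          rw [(Finset.mem_filter.1 hp).2]
        rw [Finset.sum_congr rfl inner, Finset.sum_const, nsmul_eq_mul]
        have : (D.filter (fun q => q.2 = j)).card = c j := rfl
        rw [this]; ring
    have cs1 : ((D.card : ℤ)) ^ 2
        ≤ (∑ i ∈ Finset.range n, (r i : ℤ) ^ 2) * (n : ℤ) := by
      have h := Finset.sum_mul_sq_le_sq_mul_sq (Finset.range n)
        (fun i => (r i : ℤ)) (fun _ => 1)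
      simpa [hrsumZ] using h
    have cs2 : ((D.card : ℤ)) ^ 2
        ≤ (∑ j ∈ Finset.range n, (c j : ℤ) ^ 2) * (n : ℤ) := by
      have h := Finset.sum_mul_sq_le_sq_mul_sq (Finset.range n)
        (fun j => (c j : ℤ)) (fun _ => 1)
      simpa [hcsumZ] using h
    -- assemble
    have key : (a : ℤ) * ((n : ℤ) * n - (D.card : ℤ))
        ≤ 2 * (n : ℤ) * (D.card : ℤ) - (∑ i ∈ Finset.range n, (r i : ℤ) ^ 2)
          - ∑ j ∈ Finset.range n, (c j : ℤ) ^ 2 := by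
      have h := hsum1
      rw [hcardSD, hsplitsum, hsumS, hsumD] at h
      linarith
    have hbN : (b : ℤ) + 1 ≤ (n : ℤ) := by
      have : b + 1 ≤ n := by omega
      exact_mod_cast this
    have hNpos : (0 : ℤ) < (n : ℤ) := by exact_mod_cast hn0
    have hMle : (D.card : ℤ) ≤ (n : ℤ) * n := by exact_mod_cast hDle
    have h5 : ((n : ℤ) * n - (D.card : ℤ)) * ((b : ℤ) * n - (D.card : ℤ)) ≤ 0 := by
      have haZ : (a : ℤ) = 2 * (b : ℤ) := by exact_mod_cast hab'
      rw [haZ] at key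
      nlinarith [mul_le_mul_of_nonneg_left key hNpos.le, cs1, cs2]
    have hfin : (b : ℤ) * (n : ℤ) ≤ (D.card : ℤ) := by
      by_contra hcon
      push_neg at hcon
      have h6 : ((b : ℤ) + 1) * n ≤ (n : ℤ) * n :=
        mul_le_mul_of_nonneg_right hbN (by positivity)
      have p1 : 0 < (n : ℤ) * n - (D.card : ℤ) := by linarith
      have p2 : 0 < (b : ℤ) * n - (D.card : ℤ) := by linarith
      exact absurd h5 (not_le.2 (mul_pos p1 p2))
    exact_mod_cast hfin
end

section
/- Let n ≥ 2 and let a be an odd integer with 1 ≤ a ≤ n. Then the minimum cardinality of an a-dominating set of the rook's graph K_n □ K_n equals ((a+1)/2)·n − (a−1)/2. -/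
/-!
Write `a = 2 s + 1`. A point `(i, j) ∉ D` sees exactly `r i + c j` points of `D`, where `r i`
and `c j` count the points of `D` in row `i` and column `j`.

Lower bound: let `m` be the smallest of all row and column counts, attained (after transposing)
by a row `i₀`. If `m > s`, the rows already carry `n (s + 1)` points. Otherwise the `m` columns
through the points of row `i₀` carry at least `m` points each, and each of the other `n - m`
columns carries at least `2 s + 1 - m` points, since its point on row `i₀` is not in `D`. Hence
`|D| ≥ m² + (n - m)(2 s + 1 - m) ≥ (s + 1) n - s`.

Upper bound: a circulant band of width `s + 1` on the first `n - s` rows and columns plus the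
full block on the last `s` ones has `s + 1` points on each of the first `n - s` lines and `s` on
each of the others, and every point outside it lies on one of the first `n - s` lines.
-/

open Finset

namespace RookDomination

def rowCount (D : Finset (ℕ × ℕ)) (i : ℕ) : ℕ := #{q ∈ D | q.1 = i}

def colCount (D : Finset (ℕ × ℕ)) (j : ℕ) : ℕ := #{q ∈ D | q.2 = j}

theorem card_neighbours_eq {D : Finset (ℕ × ℕ)} {p : ℕ × ℕ} (hp : p ∉ D) :
    #{q ∈ D | (q.1 = p.1 ∧ q.2 ≠ p.2) ∨ (q.2 = p.2 ∧ q.1 ≠ p.1)} =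
      rowCount D p.1 + colCount D p.2 := by
  have hne : ∀ q ∈ D, q.1 = p.1 → q.2 ≠ p.2 := fun q hq h1 h2 => hp (Prod.ext h1 h2 ▸ hq)
  rw [filter_or, card_union_of_disjoint (disjoint_filter.2 fun q _ h h' => h.2 h'.1)]
  congr 1
  · exact congrArg card (filter_congr fun q hq => and_iff_left_of_imp (hne q hq))
  · exact congrArg card (filter_congr fun q hq => and_iff_left_of_imp fun h h' => hne q hq h' h)

section Grid

variable {n : ℕ} {D : Finset (ℕ × ℕ)}

theorem card_eq_sum_rowCount (hD : D ⊆ range n ×ˢ range n) :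
    #D = ∑ i ∈ range n, rowCount D i :=
  card_eq_sum_card_fiberwise fun _ hq => (mem_product.1 (hD hq)).1

theorem rowCount_eq_card_filter (hD : D ⊆ range n ×ˢ range n) (i : ℕ) :
    rowCount D i = #{j ∈ range n | (i, j) ∈ D} := by
  rw [rowCount,
    ← card_image_of_injective {j ∈ range n | (i, j) ∈ D} (Prod.mk_right_injective i)]
  congr 1
  ext ⟨x, y⟩
  simp only [mem_filter, mem_image, mem_range, Prod.mk.injEq]
  constructor
  · rintro ⟨hq, rfl⟩
    exact ⟨y, ⟨mem_range.1 (mem_product.1 (hD hq)).2, hq⟩, rfl, rfl⟩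
  · rintro ⟨y, ⟨-, hq⟩, rfl, rfl⟩
    exact ⟨hq, rfl⟩

theorem rowCount_image_swap (D : Finset (ℕ × ℕ)) (i : ℕ) :
    rowCount (D.image Prod.swap) i = colCount D i := by
  rw [rowCount, filter_image, card_image_of_injective _ Prod.swap_injective]
  rfl

theorem colCount_image_swap (D : Finset (ℕ × ℕ)) (j : ℕ) :
    colCount (D.image Prod.swap) j = rowCount D j := by
  rw [colCount, filter_image, card_image_of_injective _ Prod.swap_injective]
  rfl

theorem image_swap_subset (hD : D ⊆ range n ×ˢ range n) :
    D.image Prod.swap ⊆ range n ×ˢ range n :=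
  image_swap_product (range n) (range n) ▸ image_subset_image hD

theorem card_eq_sum_colCount (hD : D ⊆ range n ×ˢ range n) :
    #D = ∑ j ∈ range n, colCount D j := by
  simp_rw [← rowCount_image_swap, ← card_eq_sum_rowCount (image_swap_subset hD),
    card_image_of_injective _ Prod.swap_injective]

end Grid

theorem le_card_of_minimal_row {n s i₀ : ℕ} {D : Finset (ℕ × ℕ)} (hn : 2 * s + 1 ≤ n)
    (hD : D ⊆ range n ×ˢ range n)
    (hdom : ∀ i < n, ∀ j < n, (i, j) ∉ D → 2 * s + 1 ≤ rowCount D i + colCount D j)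
    (hi₀ : i₀ < n) (hrow : ∀ i < n, rowCount D i₀ ≤ rowCount D i)
    (hcol : ∀ j < n, rowCount D i₀ ≤ colCount D j) :
    (s + 1) * n - s ≤ #D := by
  set m := rowCount D i₀
  rcases le_or_gt (s + 1) m with hsm | hms
  · calc (s + 1) * n - s ≤ n * m := (Nat.sub_le _ _).trans (by rw [mul_comm]; gcongr)
      _ = ∑ _i ∈ range n, m := by rw [sum_const, card_range, smul_eq_mul]
      _ ≤ ∑ i ∈ range n, rowCount D i := sum_le_sum fun i hi => hrow i (mem_range.1 hi)
      _ = #D := (card_eq_sum_rowCount hD).symm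
  have hO : #{j ∈ range n | (i₀, j) ∈ D} = m := (rowCount_eq_card_filter hD i₀).symm
  have hOc : #{j ∈ range n | (i₀, j) ∉ D} = n - m := by
    have := card_filter_add_card_filter_not (s := range n) (p := fun j => (i₀, j) ∈ D)
    rw [card_range] at this
    omega
  -- `m ↦ m² + (n - m)(2s + 1 - m)` exceeds its value `(s + 1) n - s` at `s`
  -- by `(s - m)(n + 1 - 2m)`
  have harith : (s + 1) * n - s ≤ m * m + (n - m) * (2 * s + 1 - m) := by
    zify [hms.le, (by omega : m ≤ n), (by nlinarith : s ≤ (s + 1) * n),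
      (by omega : m ≤ 2 * s + 1)]
    nlinarith [mul_nonneg (sub_nonneg.2 (by exact_mod_cast Nat.lt_succ_iff.1 hms : (m : ℤ) ≤ s))
      (by omega : (0 : ℤ) ≤ n + 1 - 2 * m)]
  calc (s + 1) * n - s ≤ m * m + (n - m) * (2 * s + 1 - m) := harith
    _ = ∑ _j ∈ {j ∈ range n | (i₀, j) ∈ D}, m +
          ∑ _j ∈ {j ∈ range n | (i₀, j) ∉ D}, (2 * s + 1 - m) := by
        rw [sum_const, sum_const, hO, hOc, smul_eq_mul, smul_eq_mul]
    _ ≤ ∑ j ∈ range n with (i₀, j) ∈ D, colCount D j +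
          ∑ j ∈ range n with (i₀, j) ∉ D, colCount D j := by
        refine add_le_add (sum_le_sum fun j hj => ?_) (sum_le_sum fun j hj => ?_)
        · exact hcol j (mem_range.1 (mem_filter.1 hj).1)
        · obtain ⟨hj, hjD⟩ := mem_filter.1 hj
          have := hdom i₀ hi₀ j (mem_range.1 hj) hjD
          omega
    _ = #D := by rw [sum_filter_add_sum_filter_not, card_eq_sum_colCount hD]

theorem le_card_of_dominating {n s : ℕ} {D : Finset (ℕ × ℕ)} (hn : 2 * s + 1 ≤ n)
    (hD : D ⊆ range n ×ˢ range n)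
    (hdom : ∀ i < n, ∀ j < n, (i, j) ∉ D → 2 * s + 1 ≤ rowCount D i + colCount D j) :
    (s + 1) * n - s ≤ #D := by
  have hne : (range n).Nonempty := nonempty_range_iff.2 (by omega)
  obtain ⟨i₀, hi₀, hrow⟩ := exists_min_image (range n) (rowCount D) hne
  obtain ⟨j₀, hj₀, hcol⟩ := exists_min_image (range n) (colCount D) hne
  rcases le_total (rowCount D i₀) (colCount D j₀) with hle | hle
  · exact le_card_of_minimal_row hn hD hdom (mem_range.1 hi₀)
      (fun i hi => hrow i (mem_range.2 hi)) (fun j hj => hle.trans (hcol j (mem_range.2 hj)))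
  · rw [← card_image_of_injective D Prod.swap_injective]
    refine le_card_of_minimal_row hn (image_swap_subset hD) (fun i hi j hj hij => ?_)
      (mem_range.1 hj₀) (fun i hi => ?_) (fun j hj => ?_)
    · rw [rowCount_image_swap, colCount_image_swap]
      exact (hdom j hj i hi fun h => hij (mem_image_of_mem Prod.swap h)).trans_eq (Nat.add_comm _ _)
    · simp only [rowCount_image_swap]
      exact hcol i (mem_range.2 hi)
    · rw [rowCount_image_swap, colCount_image_swap]
      exact hle.trans (hrow j (mem_range.2 hj))

theorem card_filter_range_add_mod_le (i : ℕ) {m k : ℕ} (hk : k < m) :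
    #{j ∈ range m | (i + j) % m ≤ k} = k + 1 := by
  have hinj : Set.InjOn (fun j => (i + j) % m) (range m) := fun j hj j' hj' h => by
    have := Nat.mod_injOn_Ico i m (x₁ := i + j) (x₂ := i + j')
      (by simp_all) (by simp_all) h
    omega
  have himage : (range m).image (fun j => (i + j) % m) = range m :=
    calc (range m).image (fun j => (i + j) % m) = ((range m).image (i + ·)).image (· % m) := by
          rw [image_image]; rfl
      _ = (Ico i (i + m)).image (· % m) := by rw [range_eq_Ico, image_add_left_Ico, add_zero]
      _ = range m := Nat.image_Ico_mod i m
  rw [← card_image_of_injOn (hinj.mono (filter_subset _ _)), ← filter_image (p := (· ≤ k)),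
    himage, show {y ∈ range m | y ≤ k} = range (k + 1) by
      ext; simp only [mem_filter, mem_range]; omega,
    card_range]

def bandSet (n s : ℕ) : Finset (ℕ × ℕ) :=
  {q ∈ range n ×ˢ range n |
    (q.1 < n - s ∧ q.2 < n - s ∧ (q.1 + q.2) % (n - s) ≤ s) ∨
      (n - s ≤ q.1 ∧ n - s ≤ q.2)}

section BandSet

variable {n s : ℕ}

theorem bandSet_subset : bandSet n s ⊆ range n ×ˢ range n := filter_subset _ _

theorem image_swap_bandSet : (bandSet n s).image Prod.swap = bandSet n s := by
  ext ⟨i, j⟩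
  simp only [bandSet, mem_image, mem_filter, mem_product, Prod.exists, Prod.swap_prod_mk,
    Prod.mk.injEq]
  constructor
  · rintro ⟨j, i, h, rfl, rfl⟩
    rw [Nat.add_comm]
    tauto
  · intro h
    refine ⟨j, i, ?_, rfl, rfl⟩
    rw [Nat.add_comm]
    tauto

theorem rowCount_bandSet (hn : 2 * s + 1 ≤ n) {i : ℕ} (hi : i < n) :
    rowCount (bandSet n s) i = if i < n - s then s + 1 else s := by
  rw [rowCount_eq_card_filter bandSet_subset]
  split_ifs with his
  · rw [← card_filter_range_add_mod_le i (by omega : s < n - s)]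
    congr 1
    ext j
    simp only [bandSet, mem_filter, mem_product, mem_range]
    omega
  · rw [show {j ∈ range n | (i, j) ∈ bandSet n s} = Ico (n - s) n by
      ext j; simp only [bandSet, mem_filter, mem_product, mem_range, mem_Ico]; omega]
    rw [Nat.card_Ico]
    omega

theorem colCount_bandSet (hn : 2 * s + 1 ≤ n) {j : ℕ} (hj : j < n) :
    colCount (bandSet n s) j = if j < n - s then s + 1 else s := by
  rw [← rowCount_image_swap, image_swap_bandSet, rowCount_bandSet hn hj]

theorem card_bandSet (hn : 2 * s + 1 ≤ n) : #(bandSet n s) = (s + 1) * n - s := by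
  have hlow : ∀ i ∈ range (n - s), rowCount (bandSet n s) i = s + 1 := fun i hi => by
    rw [rowCount_bandSet hn (by have := mem_range.1 hi; omega), if_pos (mem_range.1 hi)]
  have hhigh : ∀ i ∈ Ico (n - s) n, rowCount (bandSet n s) i = s := fun i hi => by
    rw [mem_Ico] at hi
    rw [rowCount_bandSet hn hi.2, if_neg (by omega)]
  rw [card_eq_sum_rowCount bandSet_subset, ← sum_range_add_sum_Ico _ (Nat.sub_le n s),
    sum_congr rfl hlow, sum_congr rfl hhigh, sum_const, sum_const, card_range, Nat.card_Ico,
    smul_eq_mul, smul_eq_mul, Nat.sub_sub_self (by omega : s ≤ n)]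
  zify [(by omega : s ≤ n), (by nlinarith : s ≤ (s + 1) * n)]
  ring

theorem rowCount_add_colCount_bandSet (hn : 2 * s + 1 ≤ n) {i j : ℕ} (hi : i < n) (hj : j < n)
    (hij : (i, j) ∉ bandSet n s) :
    2 * s + 1 ≤ rowCount (bandSet n s) i + colCount (bandSet n s) j := by
  have : i < n - s ∨ j < n - s := by
    by_contra! h
    exact hij (mem_filter.2 ⟨mem_product.2 ⟨mem_range.2 hi, mem_range.2 hj⟩, Or.inr h⟩)
  rw [rowCount_bandSet hn hi, colCount_bandSet hn hj]
  split_ifs <;> omega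

end BandSet

end RookDomination

open RookDomination

theorem stmt_11_general (n a : ℕ) (ha2 : a ≤ n) (haodd : Odd a) :
    sInf {k : ℕ | ∃ D : Finset (ℕ × ℕ), D ⊆ Finset.range n ×ˢ Finset.range n ∧
      D.card = k ∧
      ∀ p ∈ Finset.range n ×ˢ Finset.range n, p ∉ D →
        a ≤ (D.filter (fun q =>
          (q.1 = p.1 ∧ q.2 ≠ p.2) ∨ (q.2 = p.2 ∧ q.1 ≠ p.1))).card} =
    ((a + 1) / 2) * n - (a - 1) / 2 := by
  obtain ⟨s, rfl⟩ := haodd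
  rw [show (2 * s + 1 + 1) / 2 = s + 1 by omega, show (2 * s + 1 - 1) / 2 = s by omega]
  refine IsLeast.csInf_eq ⟨⟨bandSet n s, bandSet_subset, card_bandSet ha2, ?_⟩, ?_⟩
  · rintro ⟨i, j⟩ hp hpD
    rw [mem_product, mem_range, mem_range] at hp
    rw [card_neighbours_eq hpD]
    exact rowCount_add_colCount_bandSet ha2 hp.1 hp.2 hpD
  · rintro k ⟨D, hD, rfl, hdom⟩
    refine le_card_of_dominating ha2 hD fun i hi j hj hp => ?_
    rw [← card_neighbours_eq hp]
    exact hdom (i, j) (mem_product.2 ⟨mem_range.2 hi, mem_range.2 hj⟩) hp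

/-- for odd `a` with `1 ≤ a ≤ n` and `n ≥ 2`, the minimum size of an
`a`-dominating set of the rook's graph `K_n □ K_n` equals `((a+1)/2)·n − (a−1)/2`. -/
theorem stmt_11 (n a : ℕ) (hn : 2 ≤ n) (ha1 : 1 ≤ a) (ha2 : a ≤ n) (haodd : Odd a) :
    sInf {k : ℕ | ∃ D : Finset (ℕ × ℕ), D ⊆ Finset.range n ×ˢ Finset.range n ∧
      D.card = k ∧
      ∀ p ∈ Finset.range n ×ˢ Finset.range n, p ∉ D →
        a ≤ (D.filter (fun q =>
          (q.1 = p.1 ∧ q.2 ≠ p.2) ∨ (q.2 = p.2 ∧ q.1 ≠ p.1))).card} =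
    ((a + 1) / 2) * n - (a - 1) / 2 :=
  stmt_11_general n a ha2 haodd
end

section
/- Let n ≥ 2 and let a be an odd integer with n < a ≤ 2n−2. Then the minimum cardinality of an a-dominating set of the rook's graph K_n □ K_n equals ((a−1)/2)·n + ⌈ n(2n−a+1) / (2(2n−a)) ⌉. -/
open Finset

/-!
Write `a = 2t + 1` and `c = n - t`, so that `2n - a = 2c - 1` and the claimed value is
`t n + ⌈n c / (2c - 1)⌉`.

Lower bound: let `r_i`, `c_j` be the row and column counts of a dominating set `D` of size `k`.
Summing `r_i + c_j ≥ 2t + 1` over the empty cells gives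
`(2t + 1)(n² - k) ≤ ∑ r_i (n - r_i) + ∑ c_j (n - c_j)`, and `(r - t)(r - t - 1) ≥ 0` bounds
each term by `(n - 2t - 1) r + t (t + 1)`; this rearranges to `n c ≤ (2c - 1)(k - t n)`.

Upper bound: with `x = ⌈n c / (2c - 1)⌉` call the first `x` rows and columns big and the other
`m = n - x` small. A set whose big lines carry `t + 1` points, whose small lines carry `t` points,
and which contains the whole small × small block is dominating and has `t n + x` points. It is
built from a "stripe" in the big × small block, its transpose, and a cyclic band with part of its
diagonal removed in the big × big block; the inequality `n c ≤ (2c - 1) x` is exactly what makes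
the band fit.
-/

theorem card_filter_comp_of_injOn {α : Type*} {s : Finset α} {f : α → α}
    (hf : Set.MapsTo f s s) (hinj : Set.InjOn f s) (p : α → Prop) [DecidablePred p] :
    #{a ∈ s | p (f a)} = #{a ∈ s | p a} := by
  classical
  have himage : s.image f = s :=
    eq_of_subset_of_card_le (image_subset_iff.2 hf) (card_image_of_injOn hinj).ge
  rw [← card_image_of_injOn (hinj.mono (filter_subset _ s)), ← filter_image, himage]

theorem card_filter_and_ne {α : Type*} [DecidableEq α] {s : Finset α} {p : α → Prop}
    [DecidablePred p] {a : α} (ha : a ∈ s) (hpa : p a) :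
    #{b ∈ s | p b ∧ b ≠ a} = #{b ∈ s | p b} - 1 := by
  rw [← card_erase_of_mem (mem_filter.2 ⟨ha, hpa⟩)]
  congr 1
  ext b
  simp only [mem_filter, mem_erase]
  tauto

theorem card_filter_range_lt {x q : ℕ} (hq : q ≤ x) : #{j ∈ range x | j < q} = q := by
  rw [show {j ∈ range x | j < q} = range q by ext; simp; omega, card_range]

theorem card_filter_range_add (x m : ℕ) (p : ℕ → Prop) [DecidablePred p] :
    #{j ∈ range (x + m) | p j} = #{j ∈ range x | p j} + #{j ∈ range m | p (x + j)} := by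
  simp only [card_filter, sum_range_add]

theorem card_filter_fst_eq {S : Finset (ℕ × ℕ)} {J : Finset ℕ} (i : ℕ)
    (hS : ∀ p ∈ S, p.2 ∈ J) : #{p ∈ S | p.1 = i} = #{j ∈ J | (i, j) ∈ S} := by
  refine card_nbij' Prod.snd (Prod.mk i) ?_ ?_ ?_ ?_ <;> intro p hp <;> simp at hp ⊢
  · grind
  · exact hp.2
  · exact Prod.ext hp.2.symm rfl

theorem card_filter_snd_eq {S : Finset (ℕ × ℕ)} {I : Finset ℕ} (j : ℕ)
    (hS : ∀ p ∈ S, p.1 ∈ I) : #{p ∈ S | p.2 = j} = #{i ∈ I | (i, j) ∈ S} := by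
  refine card_nbij' Prod.fst (·, j) ?_ ?_ ?_ ?_ <;> intro p hp <;> simp at hp ⊢
  · grind
  · exact hp.2
  · exact Prod.ext rfl hp.2.symm

theorem sum_comp_eq_sum_card_fiber_mul {α ι : Type*} [DecidableEq ι] {s : Finset α}
    {I : Finset ι} {π : α → ι} (h : ∀ a ∈ s, π a ∈ I) (g : ι → ℤ) :
    ∑ a ∈ s, g (π a) = ∑ i ∈ I, #{a ∈ s | π a = i} * g i := by
  rw [← sum_fiberwise_of_maps_to h]
  refine sum_congr rfl fun i _ => ?_
  rw [sum_congr rfl fun a ha => by rw [(mem_filter.1 ha).2], sum_const, nsmul_eq_mul]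

section CyclicBand

variable {x q r : ℕ}

theorem card_filter_sub_mod_lt_right {i : ℕ} (hi : i < x) (hq : q ≤ x) :
    #{j ∈ range x | (j + x - i) % x < q} = q := by
  rw [card_filter_comp_of_injOn (f := fun j => (j + x - i) % x) (p := (· < q)),
    card_filter_range_lt hq]
  · exact fun j _ => mem_range.2 (Nat.mod_lt _ (by omega))
  · intro j hj j' hj' h
    simp only [coe_range, Set.mem_Iio] at hj hj'
    have := Nat.ModEq.eq_of_abs_lt h (abs_sub_lt_iff.2 ⟨by omega, by omega⟩)
    omega

theorem card_filter_sub_mod_lt_left {j : ℕ} (hj : j < x) (hq : q ≤ x) :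
    #{i ∈ range x | (j + x - i) % x < q} = q := by
  rw [card_filter_comp_of_injOn (f := fun i => (j + x - i) % x) (p := (· < q)),
    card_filter_range_lt hq]
  · exact fun i _ => mem_range.2 (Nat.mod_lt _ (by omega))
  · intro i hi i' hi' h
    simp only [coe_range, Set.mem_Iio] at hi hi'
    have := Nat.ModEq.eq_of_abs_lt h (abs_sub_lt_iff.2 ⟨by omega, by omega⟩)
    omega

/- `(j + x - i) % x` is `(j - i) mod x`: the band `{(i, j) : (j - i) mod x < q}` on `[0, x)²`,
minus the diagonal cells `(i, i)` with `i < r`. -/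

theorem card_row_cyclicBand (hq0 : 0 < q) (hq : q ≤ x) {i : ℕ} (hi : i < x) :
    #{j ∈ range x | (j + x - i) % x < q ∧ ¬(i = j ∧ i < r)}
      = q - if i < r then 1 else 0 := by
  split_ifs with hr
  · calc _ = #{j ∈ range x | (j + x - i) % x < q ∧ j ≠ i} :=
          congrArg card (filter_congr fun j _ => by grind)
      _ = q - 1 := by
        rw [card_filter_and_ne (mem_range.2 hi) (by simpa), card_filter_sub_mod_lt_right hi hq]
  · simpa [hr] using card_filter_sub_mod_lt_right hi hq

theorem card_col_cyclicBand (hq0 : 0 < q) (hq : q ≤ x) {j : ℕ} (hj : j < x) :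
    #{i ∈ range x | (j + x - i) % x < q ∧ ¬(i = j ∧ i < r)}
      = q - if j < r then 1 else 0 := by
  split_ifs with hr
  · calc _ = #{i ∈ range x | (j + x - i) % x < q ∧ i ≠ j} :=
          congrArg card (filter_congr fun i _ => by grind)
      _ = q - 1 := by
        rw [card_filter_and_ne (mem_range.2 hj) (by simpa), card_filter_sub_mod_lt_left hj hq]
  · calc _ = #{i ∈ range x | (j + x - i) % x < q} :=
          congrArg card (filter_congr fun i _ => by grind)
      _ = q - 0 := card_filter_sub_mod_lt_left hj hq

end CyclicBand

/-- Column `j` receives the residues mod `x` of the `w` consecutive numbers `j w, …, j w + w - 1`;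
for `w ≤ x` these are distinct, and the rows share the `m w` cells as evenly as possible. -/
def stripe (x m w : ℕ) : Finset (ℕ × ℕ) := (range (m * w)).image fun s => (s % x, s / w)

section Stripe

variable {x m w : ℕ}

theorem stripe_injOn (hw : w ≤ x) : Set.InjOn (fun s => (s % x, s / w)) (range (m * w)) := by
  intro a ha b _ hab
  simp only [Prod.mk.injEq] at hab
  have hw0 : 0 < w := Nat.pos_of_ne_zero (by rintro rfl; simp at ha)
  have ha' := Nat.div_add_mod a w
  have hb' := Nat.div_add_mod b w
  have := Nat.mod_lt a hw0
  have := Nat.mod_lt b hw0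
  rw [hab.2] at ha'
  exact Nat.ModEq.eq_of_abs_lt hab.1 (abs_sub_lt_iff.2 ⟨by omega, by omega⟩)

theorem stripe_subset (hx : 0 < x) : stripe x m w ⊆ range x ×ˢ range m := by
  intro p hp
  obtain ⟨s, hs, rfl⟩ := mem_image.1 hp
  have hw0 : 0 < w := Nat.pos_of_ne_zero (by rintro rfl; simp at hs)
  simp only [mem_product, mem_range]
  exact ⟨Nat.mod_lt _ hx, (Nat.div_lt_iff_lt_mul hw0).2 (by simpa using hs)⟩

theorem card_stripe_filter_fst (hx : 0 < x) (hw : w ≤ x) {i : ℕ} (hi : i < x) :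
    #{p ∈ stripe x m w | p.1 = i} = m * w / x + if i < m * w % x then 1 else 0 := by
  have hcount := Nat.count_modEq_card (m * w) hx i
  simp only [Nat.count_eq_card_filter_range, Nat.ModEq, Nat.mod_eq_of_lt hi] at hcount
  rw [stripe, filter_image,
    card_image_of_injOn ((stripe_injOn hw).mono (coe_subset.2 (filter_subset _ _)))]
  exact hcount

theorem card_stripe_filter_snd (hw : w ≤ x) {j : ℕ} (hj : j < m) :
    #{p ∈ stripe x m w | p.2 = j} = w := by
  rw [stripe, filter_image,
    card_image_of_injOn ((stripe_injOn hw).mono (coe_subset.2 (filter_subset _ _)))]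
  rcases Nat.eq_zero_or_pos w with rfl | hw0
  · simp
  have hjm : j * w + w ≤ m * w := by nlinarith
  rw [show {s ∈ range (m * w) | s / w = j} = Ico (j * w) (j * w + w) by
    ext s; simp only [mem_filter, mem_range, mem_Ico, Nat.div_eq_iff hw0]; omega]
  simp

end Stripe

theorem card_filter_rook_eq {D : Finset (ℕ × ℕ)} {p : ℕ × ℕ} (hp : p ∉ D) :
    #{q ∈ D | (q.1 = p.1 ∧ q.2 ≠ p.2) ∨ (q.2 = p.2 ∧ q.1 ≠ p.1)}
      = #{q ∈ D | q.1 = p.1} + #{q ∈ D | q.2 = p.2} := by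
  have hne : ∀ q ∈ D, q ≠ p := fun q hq h => hp (h ▸ hq)
  rw [filter_or, card_union_of_disjoint]
  · congr 1 <;> refine congrArg card (filter_congr fun q hq => ?_)
    · exact and_iff_left_of_imp fun h1 h2 => hne q hq (Prod.ext h1 h2)
    · exact and_iff_left_of_imp fun h2 h1 => hne q hq (Prod.ext h1 h2)
  · exact disjoint_filter.2 fun q _ h1 h2 => h2.2 h1.1

theorem Int.mul_sub_one_nonneg (z : ℤ) : 0 ≤ z * (z - 1) := by
  rcases le_or_gt z 0 with h | h <;> nlinarith

theorem sum_sdiff_card_fiber_le {n : ℕ} (t : ℕ) {D : Finset (ℕ × ℕ)}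
    (hD : D ⊆ range n ×ˢ range n) (π : ℕ × ℕ → ℕ)
    (hπ : ∀ p ∈ range n ×ˢ range n, π p ∈ range n)
    (hfiber : ∀ i ∈ range n, #{p ∈ range n ×ˢ range n | π p = i} = n) :
    ∑ p ∈ (range n ×ˢ range n) \ D, (#{q ∈ D | π q = π p} : ℤ)
      ≤ (n - (2 * t + 1)) * #D + n * (t * (t + 1)) := by
  set f : ℕ → ℤ := fun i => #{q ∈ D | π q = i}
  have hsum : ∑ i ∈ range n, f i = #D := by
    rw [card_eq_sum_card_fiberwise fun p hp => hπ p (hD hp)]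
    push_cast
    rfl
  calc ∑ p ∈ (range n ×ˢ range n) \ D, f (π p)
      = ∑ i ∈ range n, f i * (n - f i) := by
        rw [sum_sdiff_eq_sub hD, sum_comp_eq_sum_card_fiber_mul hπ,
          sum_comp_eq_sum_card_fiber_mul fun p hp => hπ p (hD hp), ← sum_sub_distrib]
        refine sum_congr rfl fun i hi => ?_
        rw [hfiber i hi]
        ring
    _ ≤ ∑ i ∈ range n, ((n - (2 * t + 1)) * f i + t * (t + 1)) :=
        sum_le_sum fun i _ => by nlinarith [Int.mul_sub_one_nonneg (f i - t)]
    _ = (n - (2 * t + 1)) * #D + n * (t * (t + 1)) := by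
        rw [sum_add_distrib, ← mul_sum, hsum, sum_const, card_range, nsmul_eq_mul]

theorem card_dominating_lower_bound {n t : ℕ} {D : Finset (ℕ × ℕ)}
    (hD : D ⊆ range n ×ˢ range n)
    (hdom : ∀ p ∈ range n ×ˢ range n, p ∉ D →
      2 * t + 1 ≤ #{q ∈ D | q.1 = p.1} + #{q ∈ D | q.2 = p.2}) :
    (n : ℤ) * (n - t) ≤ (2 * (n - t) - 1) * (#D - t * n) := by
  have hE : (#((range n ×ˢ range n) \ D) : ℤ) = n * n - #D := by
    rw [card_sdiff_of_subset hD, card_product, card_range,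
      Nat.cast_sub (by simpa using card_le_card hD)]
    push_cast
    ring
  have hcount : (2 * t + 1) * (#((range n ×ˢ range n) \ D) : ℤ)
      ≤ ∑ p ∈ (range n ×ˢ range n) \ D,
        ((#{q ∈ D | q.1 = p.1} : ℤ) + #{q ∈ D | q.2 = p.2}) := by
    rw [mul_comm, ← nsmul_eq_mul]
    refine card_nsmul_le_sum _ _ _ fun p hp => ?_
    rw [mem_sdiff] at hp
    exact_mod_cast hdom p hp.1 hp.2
  have hrow := sum_sdiff_card_fiber_le t hD Prod.fst (fun p hp => (mem_product.1 hp).1)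
    fun i hi => by
      rw [filter_product_left (· = i), card_product, filter_eq' (range n) i]
      simp [hi]
  have hcol := sum_sdiff_card_fiber_le t hD Prod.snd (fun p hp => (mem_product.1 hp).2)
    fun i hi => by
      rw [filter_product_right (· = i), card_product, filter_eq' (range n) i]
      simp [hi]
  rw [sum_add_distrib, hE] at hcount
  linarith

/-- Rows and columns `< x` are big, the other `m` small. Big × big: the cyclic band of width
`q = m + w + 1 - m w / x` minus the first `m w % x` diagonal cells, which tops up the stripe's row
counts `m w / x + [i < m w % x]` to `m + w + 1`; big × small: `stripe x m w`; small × big: its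
transpose; small × small: everything. -/
def rookConstruction (x m w : ℕ) : Finset (ℕ × ℕ) :=
  {p ∈ range (x + m) ×ˢ range (x + m) |
    if p.1 < x then
      if p.2 < x then
        (p.2 + x - p.1) % x < m + w + 1 - m * w / x ∧ ¬(p.1 = p.2 ∧ p.1 < m * w % x)
      else (p.1, p.2 - x) ∈ stripe x m w
    else p.2 < x → (p.2, p.1 - x) ∈ stripe x m w}

section Construction

variable {x m w : ℕ}

theorem rookConstruction_subset : rookConstruction x m w ⊆ range (x + m) ×ˢ range (x + m) :=
  filter_subset _ _

theorem card_rookConstruction_filter_fst (hw : w ≤ x) (hq : m + w + 1 ≤ x + m * w / x) {i : ℕ}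
    (hi : i < x + m) :
    #{p ∈ rookConstruction x m w | p.1 = i} = if i < x then m + w + 1 else m + w := by
  have hx : 0 < x := Nat.pos_of_ne_zero (by rintro rfl; simp at hq)
  have hdiv : m * w / x ≤ m := Nat.div_le_of_le_mul (by nlinarith)
  rw [card_filter_fst_eq i fun p hp => (mem_product.1 (rookConstruction_subset hp)).2,
    card_filter_range_add]
  split_ifs with hix
  · have hbig : #{j ∈ range x | (i, j) ∈ rookConstruction x m w}
        = #{j ∈ range x |
            (j + x - i) % x < m + w + 1 - m * w / x ∧ ¬(i = j ∧ i < m * w % x)} :=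
      congrArg card (filter_congr fun j hj => by
        simp [rookConstruction, hix, mem_range.1 hj, hi, Nat.lt_add_right m (mem_range.1 hj)])
    have hsmall : #{j ∈ range m | (i, x + j) ∈ rookConstruction x m w}
        = #{p ∈ stripe x m w | p.1 = i} := by
      rw [card_filter_fst_eq i fun p hp => (mem_product.1 (stripe_subset hx hp)).2]
      exact congrArg card (filter_congr fun j hj => by
        simp [rookConstruction, hix, mem_range.1 hj, hi])
    rw [hbig, hsmall, card_row_cyclicBand (by omega) (by omega) hix,
      card_stripe_filter_fst hx hw hix]
    split_ifs <;> omega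
  · have hbig : #{j ∈ range x | (i, j) ∈ rookConstruction x m w}
        = #{p ∈ stripe x m w | p.2 = i - x} := by
      rw [card_filter_snd_eq (i - x) fun p hp => (mem_product.1 (stripe_subset hx hp)).1]
      exact congrArg card (filter_congr fun j hj => by
        simp [rookConstruction, hix, mem_range.1 hj, hi, Nat.lt_add_right m (mem_range.1 hj)])
    have hsmall : #{j ∈ range m | (i, x + j) ∈ rookConstruction x m w} = m := by
      rw [filter_true_of_mem fun j hj => by simp [rookConstruction, hix, mem_range.1 hj, hi],
        card_range]
    rw [hbig, hsmall, card_stripe_filter_snd hw (by omega), add_comm]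

theorem card_rookConstruction_filter_snd (hw : w ≤ x) (hq : m + w + 1 ≤ x + m * w / x) {j : ℕ}
    (hj : j < x + m) :
    #{p ∈ rookConstruction x m w | p.2 = j} = if j < x then m + w + 1 else m + w := by
  have hx : 0 < x := Nat.pos_of_ne_zero (by rintro rfl; simp at hq)
  have hdiv : m * w / x ≤ m := Nat.div_le_of_le_mul (by nlinarith)
  rw [card_filter_snd_eq j fun p hp => (mem_product.1 (rookConstruction_subset hp)).1,
    card_filter_range_add]
  split_ifs with hjx
  · have hbig : #{i ∈ range x | (i, j) ∈ rookConstruction x m w}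
        = #{i ∈ range x |
            (j + x - i) % x < m + w + 1 - m * w / x ∧ ¬(i = j ∧ i < m * w % x)} :=
      congrArg card (filter_congr fun i hi => by
        simp [rookConstruction, hjx, mem_range.1 hi, hj, Nat.lt_add_right m (mem_range.1 hi)])
    have hsmall : #{i ∈ range m | (x + i, j) ∈ rookConstruction x m w}
        = #{p ∈ stripe x m w | p.1 = j} := by
      rw [card_filter_fst_eq j fun p hp => (mem_product.1 (stripe_subset hx hp)).2]
      exact congrArg card (filter_congr fun i hi => by
        simp [rookConstruction, hjx, mem_range.1 hi, hj])
    rw [hbig, hsmall, card_col_cyclicBand (by omega) (by omega) hjx,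
      card_stripe_filter_fst hx hw hjx]
    split_ifs <;> omega
  · have hbig : #{i ∈ range x | (i, j) ∈ rookConstruction x m w}
        = #{p ∈ stripe x m w | p.2 = j - x} := by
      rw [card_filter_snd_eq (j - x) fun p hp => (mem_product.1 (stripe_subset hx hp)).1]
      exact congrArg card (filter_congr fun i hi => by
        simp [rookConstruction, hjx, mem_range.1 hi, hj, Nat.lt_add_right m (mem_range.1 hi)])
    have hsmall : #{i ∈ range m | (x + i, j) ∈ rookConstruction x m w} = m := by
      rw [filter_true_of_mem fun i hi => by simp [rookConstruction, hjx, mem_range.1 hi, hj],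
        card_range]
    rw [hbig, hsmall, card_stripe_filter_snd hw (by omega), add_comm]

theorem card_rookConstruction (hw : w ≤ x) (hq : m + w + 1 ≤ x + m * w / x) :
    #(rookConstruction x m w) = (m + w) * (x + m) + x := by
  rw [card_eq_sum_card_fiberwise fun p hp => (mem_product.1 (rookConstruction_subset hp)).1,
    sum_congr rfl fun i hi => card_rookConstruction_filter_fst hw hq (mem_range.1 hi),
    sum_range_add, sum_congr rfl fun i hi => if_pos (mem_range.1 hi),
    sum_congr rfl fun i _ => if_neg (Nat.not_lt.2 (Nat.le_add_right x i))]
  simp only [sum_const, card_range, smul_eq_mul]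
  ring

theorem rookConstruction_dominating (hw : w ≤ x) (hq : m + w + 1 ≤ x + m * w / x)
    {p : ℕ × ℕ} (hp : p ∈ range (x + m) ×ˢ range (x + m))
    (hpD : p ∉ rookConstruction x m w) :
    2 * (m + w) + 1 ≤ #{q ∈ rookConstruction x m w | q.1 = p.1}
      + #{q ∈ rookConstruction x m w | q.2 = p.2} := by
  rw [mem_product, mem_range, mem_range] at hp
  have hbig : p.1 < x ∨ p.2 < x := by
    by_contra! h
    exact hpD (mem_filter.2 ⟨mem_product.2 ⟨mem_range.2 hp.1, mem_range.2 hp.2⟩,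
      by simp [h.1.not_gt, h.2.not_gt]⟩)
  rw [card_rookConstruction_filter_fst hw hq hp.1, card_rookConstruction_filter_snd hw hq hp.2]
  split_ifs <;> omega

end Construction

theorem Nat.mul_ceilDiv_mul_left {a b k : ℕ} (hk : 0 < k) (hb : 0 < b) :
    (k * a) ⌈/⌉ (k * b) = a ⌈/⌉ b :=
  eq_of_forall_ge_iff fun y => by
    rw [ceilDiv_le_iff_le_mul (Nat.mul_pos hk hb), ceilDiv_le_iff_le_mul hb, mul_assoc,
      Nat.mul_le_mul_left_iff hk]

theorem le_card_of_dominating {n t : ℕ} (ht : t < n) {D : Finset (ℕ × ℕ)}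
    (hD : D ⊆ range n ×ˢ range n)
    (hdom : ∀ p ∈ range n ×ˢ range n, p ∉ D →
      2 * t + 1 ≤ #{q ∈ D | (q.1 = p.1 ∧ q.2 ≠ p.2) ∨ (q.2 = p.2 ∧ q.1 ≠ p.1)}) :
    t * n + n * (n - t) ⌈/⌉ (2 * (n - t) - 1) ≤ #D := by
  have hlower := card_dominating_lower_bound hD fun p hp hpD =>
    (hdom p hp hpD).trans_eq (card_filter_rook_eq hpD)
  have hexcess : t * n ≤ #D := by
    by_contra! h
    have hneg : (#D : ℤ) - t * n < 0 := by push_cast [sub_neg]; exact_mod_cast h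
    have hnt : (1 : ℤ) ≤ n - t := by omega
    nlinarith [mul_neg_of_pos_of_neg (show (0 : ℤ) < 2 * (n - t) - 1 by linarith) hneg]
  have hmul : n * (n - t) ≤ (2 * (n - t) - 1) * (#D - t * n) := by
    zify [ht.le, hexcess, show 1 ≤ 2 * (n - t) by omega]
    exact hlower
  have := (ceilDiv_le_iff_le_mul (show 0 < 2 * (n - t) - 1 by omega)).2 hmul
  omega

theorem exists_dominating_of_le_mul {n t c x : ℕ} (hn : n = t + c) (hc : 0 < c) (hcx : c ≤ x)
    (hxn : x ≤ n) (hx : n * c ≤ (2 * c - 1) * x) :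
    ∃ D ⊆ range n ×ˢ range n, #D = t * n + x ∧ ∀ p ∈ range n ×ˢ range n, p ∉ D →
      2 * t + 1 ≤ #{q ∈ D | (q.1 = p.1 ∧ q.2 ≠ p.2) ∨ (q.2 = p.2 ∧ q.1 ≠ p.1)} := by
  subst hn
  obtain ⟨w, rfl⟩ : ∃ w, x = c + w := ⟨x - c, by omega⟩
  obtain ⟨m, rfl⟩ : ∃ m, t = m + w := ⟨t - w, by omega⟩
  have hq : m + w + 1 ≤ c + w + m * w / (c + w) := by
    have hmul : (m + w + 1 - (c + w)) * (c + w) ≤ m * w := by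
      zify [show 1 ≤ 2 * c by omega] at hx
      rcases le_or_gt (c + w) (m + w + 1) with h | h
      · zify [h]; nlinarith
      · rw [Nat.sub_eq_zero_of_le h.le, zero_mul]; exact Nat.zero_le _
    have := (Nat.le_div_iff_mul_le (by omega)).2 hmul
    omega
  rw [show m + w + c = c + w + m by ring]
  refine ⟨rookConstruction (c + w) m w, rookConstruction_subset, ?_, fun p hp hpD => ?_⟩
  · rw [card_rookConstruction (by omega) hq]
  · exact (rookConstruction_dominating (by omega) hq hp hpD).trans_eq
      (card_filter_rook_eq hpD).symm

theorem exists_dominating_card_eq {n t : ℕ} (ht : t < n) (hnt : n ≤ 2 * t + 1) :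
    ∃ D ⊆ range n ×ˢ range n, #D = t * n + n * (n - t) ⌈/⌉ (2 * (n - t) - 1) ∧
      ∀ p ∈ range n ×ˢ range n, p ∉ D →
        2 * t + 1 ≤ #{q ∈ D | (q.1 = p.1 ∧ q.2 ≠ p.2) ∨ (q.2 = p.2 ∧ q.1 ≠ p.1)} := by
  set c := n - t
  set x := n * c ⌈/⌉ (2 * c - 1)
  have hceil : ∀ y, x ≤ y ↔ n * c ≤ (2 * c - 1) * y :=
    fun _ => ceilDiv_le_iff_le_mul (by omega)
  have hcx : c ≤ x := by
    by_contra! h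
    have h1 := (hceil (c - 1)).1 (by omega)
    have h2 := Nat.mul_lt_mul_of_pos_left (show c - 1 < c by omega) (show 0 < 2 * c - 1 by omega)
    have h3 := Nat.mul_le_mul_right c (show 2 * c - 1 ≤ n by omega)
    omega
  have hxn : x ≤ n := (hceil n).2 (by rw [mul_comm n c]; exact Nat.mul_le_mul_right n (by omega))
  exact exists_dominating_of_le_mul (by omega) (by omega) hcx hxn ((hceil x).1 le_rfl)

theorem stmt_12_general (n a : ℕ) (ha1 : n < a) (ha2 : a ≤ 2 * n - 2)
    (haodd : Odd a) :
    sInf {k : ℕ | ∃ D : Finset (ℕ × ℕ), D ⊆ Finset.range n ×ˢ Finset.range n ∧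
      D.card = k ∧
      ∀ p ∈ Finset.range n ×ˢ Finset.range n, p ∉ D →
        a ≤ (D.filter (fun q =>
          (q.1 = p.1 ∧ q.2 ≠ p.2) ∨ (q.2 = p.2 ∧ q.1 ≠ p.1))).card} =
    ((a - 1) / 2) * n + (n * (2 * n - a + 1) + (2 * (2 * n - a)) - 1) / (2 * (2 * n - a)) := by
  obtain ⟨t, rfl⟩ := haodd
  rw [show n * (2 * n - (2 * t + 1) + 1) = 2 * (n * (n - t)) by
      rw [show 2 * n - (2 * t + 1) + 1 = 2 * (n - t) by omega]; ring,
    show 2 * n - (2 * t + 1) = 2 * (n - t) - 1 by omega, ← Nat.ceilDiv_eq_add_pred_div,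
    Nat.mul_ceilDiv_mul_left two_pos (by omega), show (2 * t + 1 - 1) / 2 = t by omega]
  obtain ⟨D₀, hD₀⟩ := exists_dominating_card_eq (show t < n by omega) (by omega)
  exact le_antisymm (Nat.sInf_le ⟨D₀, hD₀⟩) (le_csInf ⟨_, D₀, hD₀⟩
    fun k ⟨D, hD, hk, hdom⟩ => hk ▸ le_card_of_dominating (by omega) hD hdom)

/-- for odd `a` with `n < a ≤ 2n−2` and `n ≥ 2`, the minimum size of an
`a`-dominating set of the rook's graph `K_n □ K_n` equals
`((a−1)/2)·n + ⌈n(2n−a+1)/(2(2n−a))⌉`. -/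
theorem stmt_12 (n a : ℕ) (hn : 2 ≤ n) (ha1 : n < a) (ha2 : a ≤ 2 * n - 2)
    (haodd : Odd a) :
    sInf {k : ℕ | ∃ D : Finset (ℕ × ℕ), D ⊆ Finset.range n ×ˢ Finset.range n ∧
      D.card = k ∧
      ∀ p ∈ Finset.range n ×ˢ Finset.range n, p ∉ D →
        a ≤ (D.filter (fun q =>
          (q.1 = p.1 ∧ q.2 ≠ p.2) ∨ (q.2 = p.2 ∧ q.1 ≠ p.1))).card} =
    ((a - 1) / 2) * n + (n * (2 * n - a + 1) + (2 * (2 * n - a)) - 1) / (2 * (2 * n - a)) :=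
  stmt_12_general n a ha1 ha2 haodd
end

section
/- Let 𝒵 ⊆ ℤ_{≥0}² be a downward-closed set, let a and b be the sizes of the longest row and column of 𝒵 respectively, and let m, n > ab. Then γ²(𝒵, m, n), the minimum size of a set D ⊆ [0,n-1]×[0,m-1] from which the neighborhood growth dynamics occupies everything in at most 2 steps, equals the minimum of bx + ay − xy over all concave corners (x,y) of 𝒵. -/
open Finset
open scoped Classical

/-- The rectangle `R_{n,m} = [0,n-1] × [0,m-1]` as a finset; a point `(j,i)` has
`j < n` and `i < m`. -/
def rectF (n m : ℕ) : Finset (ℕ × ℕ) := Finset.range n ×ˢ Finset.range m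

/-- One step of the neighborhood growth dynamics with zero-set `Z` on `R_{n,m}`:
a point `(j,i) ∉ A` becomes occupied iff the pair (row count, column count) of its
currently occupied neighbors lies outside `Z`. -/
noncomputable def growthStep (Z : Set (ℕ × ℕ)) (n m : ℕ) (A : Finset (ℕ × ℕ)) : Finset (ℕ × ℕ) :=
  A ∪ (rectF n m).filter (fun p =>
    ((A.filter (fun q => q.2 = p.2 ∧ q.1 ≠ p.1)).card,
     (A.filter (fun q => q.1 = p.1 ∧ q.2 ≠ p.2)).card) ∉ Z)

/-- `(x,y)` is a concave corner of the downward-closed set `Z`. -/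
def concaveCorner (Z : Set (ℕ × ℕ)) (x y : ℕ) : Prop :=
  (x, y) ∉ Z ∧ (x = 0 ∨ (x - 1, y) ∈ Z) ∧ (y = 0 ∨ (x, y - 1) ∈ Z)

lemma mem_growthStep {Z : Set (ℕ × ℕ)} {n m : ℕ} {A : Finset (ℕ × ℕ)} {p : ℕ × ℕ} :
    p ∈ growthStep Z n m A ↔ p ∈ A ∨ (p ∈ rectF n m ∧
      ((A.filter (fun q => q.2 = p.2 ∧ q.1 ≠ p.1)).card,
       (A.filter (fun q => q.1 = p.1 ∧ q.2 ≠ p.2)).card) ∉ Z) := by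
  simp [growthStep]

lemma subset_growthStep {Z : Set (ℕ × ℕ)} {n m : ℕ} {A : Finset (ℕ × ℕ)} :
    A ⊆ growthStep Z n m A := Finset.subset_union_left

lemma growthStep_subset_rect {Z : Set (ℕ × ℕ)} {n m : ℕ} {A : Finset (ℕ × ℕ)}
    (h : A ⊆ rectF n m) : growthStep Z n m A ⊆ rectF n m :=
  Finset.union_subset h (Finset.filter_subset _ _)

lemma mem_rectF {n m : ℕ} {p : ℕ × ℕ} : p ∈ rectF n m ↔ p.1 < n ∧ p.2 < m := by
  simp [rectF]

section Main

variable {Z : Set (ℕ × ℕ)} {a b m n : ℕ}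

/-- growth trigger: column count at least `b`. -/
lemma grow_of_col (hZdc : ∀ p ∈ Z, ∀ q : ℕ × ℕ, q.1 ≤ p.1 → q.2 ≤ p.2 → q ∈ Z)
    (hcol : ∀ y : ℕ, ((0, y) ∈ Z ↔ y < b))
    {A : Finset (ℕ × ℕ)} {p : ℕ × ℕ} (hp : p ∈ rectF n m)
    (h : b ≤ (A.filter (fun q => q.1 = p.1 ∧ q.2 ≠ p.2)).card) :
    p ∈ growthStep Z n m A := by
  rw [mem_growthStep]
  right
  refine ⟨hp, fun hmem => ?_⟩
  have h0 : ((0 : ℕ), b) ∈ Z := hZdc _ hmem (0, b) (Nat.zero_le _) h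
  rw [hcol] at h0
  omega

/-- growth trigger: row count at least `a`. -/
lemma grow_of_row (hZdc : ∀ p ∈ Z, ∀ q : ℕ × ℕ, q.1 ≤ p.1 → q.2 ≤ p.2 → q ∈ Z)
    (hrow : ∀ x : ℕ, ((x, 0) ∈ Z ↔ x < a))
    {A : Finset (ℕ × ℕ)} {p : ℕ × ℕ} (hp : p ∈ rectF n m)
    (h : a ≤ (A.filter (fun q => q.2 = p.2 ∧ q.1 ≠ p.1)).card) :
    p ∈ growthStep Z n m A := by
  rw [mem_growthStep]
  right
  refine ⟨hp, fun hmem => ?_⟩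
  have h0 : ((a : ℕ), 0) ∈ Z := hZdc _ hmem (a, 0) h (Nat.zero_le _)
  rw [hrow] at h0
  omega

/-- growth trigger: a pair outside `Z` dominated by the counts. -/
lemma grow_of_corner (hZdc : ∀ p ∈ Z, ∀ q : ℕ × ℕ, q.1 ≤ p.1 → q.2 ≤ p.2 → q ∈ Z)
    {A : Finset (ℕ × ℕ)} {p : ℕ × ℕ} {x y : ℕ} (hp : p ∈ rectF n m)
    (hxy : (x, y) ∉ Z)
    (hr : x ≤ (A.filter (fun q => q.2 = p.2 ∧ q.1 ≠ p.1)).card)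
    (hc : y ≤ (A.filter (fun q => q.1 = p.1 ∧ q.2 ≠ p.2)).card) :
    p ∈ growthStep Z n m A := by
  rw [mem_growthStep]
  right
  exact ⟨hp, fun hmem => hxy (hZdc _ hmem (x, y) hr hc)⟩

/-- Upper bound construction for a pair `(x,y) ∉ Z`. -/
lemma upper_bound (hZdc : ∀ p ∈ Z, ∀ q : ℕ × ℕ, q.1 ≤ p.1 → q.2 ≤ p.2 → q ∈ Z)
    (hrow : ∀ x : ℕ, ((x, 0) ∈ Z ↔ x < a))
    (hcol : ∀ y : ℕ, ((0, y) ∈ Z ↔ y < b))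
    (han : a ≤ n) (hbm : b ≤ m)
    {x y : ℕ} (hx : x ≤ a) (hy : y ≤ b) (hxy : (x, y) ∉ Z) :
    ∃ A : Finset (ℕ × ℕ), A ⊆ rectF n m ∧ A.card = b * x + a * y - x * y ∧
      (growthStep Z n m)^[2] A = rectF n m := by
  set A : Finset (ℕ × ℕ) :=
    (Finset.range x ×ˢ Finset.range b) ∪ (Finset.range a ×ˢ Finset.range y) with hAdef
  have hsub : A ⊆ rectF n m := by
    intro p hp
    rw [mem_rectF]
    simp only [hAdef, Finset.mem_union, Finset.mem_product, Finset.mem_range] at hp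
    omega
  have hinter : (Finset.range x ×ˢ Finset.range b) ∩ (Finset.range a ×ˢ Finset.range y)
      = Finset.range x ×ˢ Finset.range y := by
    ext p
    simp only [Finset.mem_inter, Finset.mem_product, Finset.mem_range]
    omega
  have hcard : A.card = b * x + a * y - x * y := by
    have h1 := Finset.card_union_add_card_inter
      (Finset.range x ×ˢ Finset.range b) (Finset.range a ×ˢ Finset.range y)
    rw [hinter] at h1
    simp only [Finset.card_product, Finset.card_range] at h1
    rw [← hAdef] at h1
    have : A.card = x * b + a * y - x * y := by omega
    rwa [mul_comm x b] at this
  set B := growthStep Z n m A with hBdef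
  -- after one step, the first x columns and first y rows are occupied
  have hL : ∀ p : ℕ × ℕ, p ∈ rectF n m → (p.1 < x ∨ p.2 < y) → p ∈ B := by
    intro p hp hcase
    rcases hcase with h1 | h2
    · by_cases h2 : p.2 < b
      · exact subset_growthStep (by
          simp only [hAdef, Finset.mem_union, Finset.mem_product, Finset.mem_range]
          exact Or.inl ⟨h1, h2⟩)
      · push_neg at h2
        refine grow_of_col hZdc hcol hp ?_
        have hsub2 : ({p.1} ×ˢ Finset.range b) ⊆
            A.filter (fun q => q.1 = p.1 ∧ q.2 ≠ p.2) := by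
          intro q hq
          simp only [Finset.mem_product, Finset.mem_singleton, Finset.mem_range] at hq
          rw [Finset.mem_filter]
          refine ⟨?_, hq.1, by omega⟩
          simp only [hAdef, Finset.mem_union, Finset.mem_product, Finset.mem_range]
          exact Or.inl ⟨by omega, hq.2⟩
        have := Finset.card_le_card hsub2
        simpa using this
    · by_cases h1 : p.1 < a
      · exact subset_growthStep (by
          simp only [hAdef, Finset.mem_union, Finset.mem_product, Finset.mem_range]
          exact Or.inr ⟨h1, h2⟩)
      · push_neg at h1
        refine grow_of_row hZdc hrow hp ?_
        have hsub2 : (Finset.range a ×ˢ ({p.2} : Finset ℕ)) ⊆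
            A.filter (fun q => q.2 = p.2 ∧ q.1 ≠ p.1) := by
          intro q hq
          simp only [Finset.mem_product, Finset.mem_singleton, Finset.mem_range] at hq
          rw [Finset.mem_filter]
          refine ⟨?_, hq.2, by omega⟩
          simp only [hAdef, Finset.mem_union, Finset.mem_product, Finset.mem_range]
          exact Or.inr ⟨hq.1, by omega⟩
        have := Finset.card_le_card hsub2
        simpa using this
  refine ⟨A, hsub, hcard, ?_⟩
  have hit : (growthStep Z n m)^[2] A = growthStep Z n m B := rfl
  rw [hit]
  apply Finset.Subset.antisymm
  · exact growthStep_subset_rect (growthStep_subset_rect hsub)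
  · intro p hp
    by_cases hcase : p.1 < x ∨ p.2 < y
    · exact subset_growthStep (hL p hp hcase)
    · push_neg at hcase
      obtain ⟨hpx, hpy⟩ := hcase
      refine grow_of_corner hZdc hp hxy ?_ ?_
      · have hsub2 : (Finset.range x ×ˢ ({p.2} : Finset ℕ)) ⊆
            B.filter (fun q => q.2 = p.2 ∧ q.1 ≠ p.1) := by
          intro q hq
          simp only [Finset.mem_product, Finset.mem_singleton, Finset.mem_range] at hq
          rw [Finset.mem_filter]
          refine ⟨hL q ?_ (Or.inl hq.1), hq.2, by omega⟩
          rw [mem_rectF]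
          rw [mem_rectF] at hp
          exact ⟨by omega, by omega⟩
        have := Finset.card_le_card hsub2
        simpa using this
      · have hsub2 : (({p.1} : Finset ℕ) ×ˢ Finset.range y) ⊆
            B.filter (fun q => q.1 = p.1 ∧ q.2 ≠ p.2) := by
          intro q hq
          simp only [Finset.mem_product, Finset.mem_singleton, Finset.mem_range] at hq
          rw [Finset.mem_filter]
          refine ⟨hL q ?_ (Or.inr hq.2), hq.1, by omega⟩
          rw [mem_rectF]
          rw [mem_rectF] at hp
          exact ⟨by omega, by omega⟩
        have := Finset.card_le_card hsub2
        simpa using this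

set_option maxHeartbeats 1600000 in
/-- Lower bound: any set that fills the rectangle in two steps has size at least
`bx + ay - xy` for some concave corner. -/
lemma lower_bound (hZdc : ∀ p ∈ Z, ∀ q : ℕ × ℕ, q.1 ≤ p.1 → q.2 ≤ p.2 → q ∈ Z)
    (hrow : ∀ x : ℕ, ((x, 0) ∈ Z ↔ x < a))
    (hcol : ∀ y : ℕ, ((0, y) ∈ Z ↔ y < b))
    (hm : a * b < m) (hn : a * b < n)
    {A : Finset (ℕ × ℕ)} (hA : A ⊆ rectF n m)
    (hT : (growthStep Z n m)^[2] A = rectF n m) :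
    ∃ x y : ℕ, concaveCorner Z x y ∧ b * x + a * y - x * y ≤ A.card := by
  by_cases h00 : ((0 : ℕ), (0 : ℕ)) ∈ Z
  swap
  · exact ⟨0, 0, ⟨h00, Or.inl rfl, Or.inl rfl⟩, by simp⟩
  have ha : 0 < a := (hrow 0).mp h00
  have hb : 0 < b := (hcol 0).mp h00
  by_cases hcard : a * b ≤ A.card
  · refine ⟨a, 0, ⟨?_, Or.inr ?_, Or.inl rfl⟩, ?_⟩
    · rw [hrow]; omega
    · rw [hrow]; omega
    · simpa [mul_comm] using hcard
  push_neg at hcard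
  -- find an empty column j0 and empty row i0
  obtain ⟨j0, hj0n, hj0⟩ : ∃ j, j < n ∧ ∀ q ∈ A, q.1 ≠ j := by
    have h1 : ¬ (Finset.range n ⊆ A.image Prod.fst) := by
      intro h
      have := Finset.card_le_card h
      have h2 := Finset.card_image_le (s := A) (f := Prod.fst)
      simp only [Finset.card_range] at this
      omega
    rw [Finset.not_subset] at h1
    obtain ⟨j, hj1, hj2⟩ := h1
    refine ⟨j, Finset.mem_range.mp hj1, fun q hq e => hj2 ?_⟩
    exact Finset.mem_image.mpr ⟨q, hq, e⟩
  obtain ⟨i0, hi0m, hi0⟩ : ∃ i, i < m ∧ ∀ q ∈ A, q.2 ≠ i := by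
    have h1 : ¬ (Finset.range m ⊆ A.image Prod.snd) := by
      intro h
      have := Finset.card_le_card h
      have h2 := Finset.card_image_le (s := A) (f := Prod.snd)
      simp only [Finset.card_range] at this
      omega
    rw [Finset.not_subset] at h1
    obtain ⟨i, hi1, hi2⟩ := h1
    refine ⟨i, Finset.mem_range.mp hi1, fun q hq e => hi2 ?_⟩
    exact Finset.mem_image.mpr ⟨q, hq, e⟩
  -- heavy columns and rows
  set Cset := (Finset.range n).filter
    (fun j => b ≤ (A.filter (fun q => q.1 = j)).card) with hCdef
  set Rset := (Finset.range m).filter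
    (fun i => a ≤ (A.filter (fun q => q.2 = i)).card) with hRdef
  set X := Cset.card with hXdef
  set Y := Rset.card with hYdef
  set A1 := A.filter (fun q => q.1 ∈ Cset) with hA1def
  set A2 := A.filter (fun q => q.2 ∈ Rset) with hA2def
  have hA1card : b * X ≤ A1.card := by
    have hfib : A1.card = ∑ j ∈ Cset, (A1.filter (fun q => q.1 = j)).card :=
      Finset.card_eq_sum_card_fiberwise (fun q hq => (Finset.mem_filter.mp hq).2)
    have hterm : ∀ j ∈ Cset, b ≤ (A1.filter (fun q => q.1 = j)).card := by
      intro j hj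
      have hbj : b ≤ (A.filter (fun q => q.1 = j)).card := (Finset.mem_filter.mp hj).2
      refine le_trans hbj (Finset.card_le_card ?_)
      intro q hq
      rw [Finset.mem_filter] at hq ⊢
      refine ⟨Finset.mem_filter.mpr ⟨hq.1, ?_⟩, hq.2⟩
      rw [hq.2]; exact hj
    calc b * X = ∑ _j ∈ Cset, b := by rw [Finset.sum_const, smul_eq_mul, mul_comm]
    _ ≤ ∑ j ∈ Cset, (A1.filter (fun q => q.1 = j)).card := Finset.sum_le_sum hterm
    _ = A1.card := hfib.symm
  have hA2card : a * Y ≤ A2.card := by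
    have hfib : A2.card = ∑ i ∈ Rset, (A2.filter (fun q => q.2 = i)).card :=
      Finset.card_eq_sum_card_fiberwise (fun q hq => (Finset.mem_filter.mp hq).2)
    have hterm : ∀ i ∈ Rset, a ≤ (A2.filter (fun q => q.2 = i)).card := by
      intro i hi
      have hai : a ≤ (A.filter (fun q => q.2 = i)).card := (Finset.mem_filter.mp hi).2
      refine le_trans hai (Finset.card_le_card ?_)
      intro q hq
      rw [Finset.mem_filter] at hq ⊢
      refine ⟨Finset.mem_filter.mpr ⟨hq.1, ?_⟩, hq.2⟩
      rw [hq.2]; exact hi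
    calc a * Y = ∑ _i ∈ Rset, a := by rw [Finset.sum_const, smul_eq_mul, mul_comm]
    _ ≤ ∑ i ∈ Rset, (A2.filter (fun q => q.2 = i)).card := Finset.sum_le_sum hterm
    _ = A2.card := hfib.symm
  have hintcard : (A1 ∩ A2).card ≤ X * Y := by
    refine le_trans (Finset.card_le_card (show A1 ∩ A2 ⊆ Cset ×ˢ Rset from ?_)) ?_
    · intro q hq
      rw [Finset.mem_inter] at hq
      rw [Finset.mem_product]
      exact ⟨(Finset.mem_filter.mp hq.1).2, (Finset.mem_filter.mp hq.2).2⟩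
    · rw [Finset.card_product]
  have hcount : b * X + a * Y ≤ A.card + X * Y := by
    have h1 := Finset.card_union_add_card_inter A1 A2
    have h2 : (A1 ∪ A2).card ≤ A.card :=
      Finset.card_le_card (Finset.union_subset (Finset.filter_subset _ _)
        (Finset.filter_subset _ _))
    omega
  have hbX : b * X ≤ A.card :=
    le_trans hA1card (Finset.card_le_card (Finset.filter_subset _ _))
  have haY : a * Y ≤ A.card :=
    le_trans hA2card (Finset.card_le_card (Finset.filter_subset _ _))
  have hXa : X ≤ a := by
    by_contra hXa
    push_neg at hXa
    have : b * (a + 1) ≤ b * X := Nat.mul_le_mul_left _ (by omega)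
    nlinarith
  have hYb : Y ≤ b := by
    by_contra hYb
    push_neg at hYb
    have : a * (b + 1) ≤ a * Y := Nat.mul_le_mul_left _ (by omega)
    nlinarith
  -- the point (j0, i0) is not occupied after one step
  set B := growthStep Z n m A with hBdef
  have hp0rect : ((j0, i0) : ℕ × ℕ) ∈ rectF n m := mem_rectF.mpr ⟨hj0n, hi0m⟩
  have hp0 : ((j0, i0) : ℕ × ℕ) ∈ growthStep Z n m B := by
    have hit : (growthStep Z n m)^[2] A = growthStep Z n m B := rfl
    rw [← hit, hT]
    exact hp0rect
  have hrow0 : A.filter (fun q => q.2 = (i0 : ℕ) ∧ q.1 ≠ j0) = ∅ := by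
    rw [Finset.filter_eq_empty_iff]
    intro q hq hcond
    exact hi0 q hq hcond.1
  have hcol0 : A.filter (fun q => q.1 = (j0 : ℕ) ∧ q.2 ≠ i0) = ∅ := by
    rw [Finset.filter_eq_empty_iff]
    intro q hq hcond
    exact hj0 q hq hcond.1
  have hp0notB : ((j0, i0) : ℕ × ℕ) ∉ B := by
    rw [hBdef, mem_growthStep]
    push_neg
    constructor
    · intro hmem; exact hj0 _ hmem rfl
    · intro _
      simp only [hrow0, hcol0, Finset.card_empty]
      exact h00
  -- so the counts of B at (j0,i0) lie outside Z
  have hp0' := mem_growthStep.mp hp0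
  rcases hp0' with hmem | ⟨_, hnotZ⟩
  · exact absurd hmem hp0notB
  -- bound the row count of B at (j0,i0) by X
  set s1 := B.filter (fun q => q.2 = (i0 : ℕ) ∧ q.1 ≠ j0) with hs1def
  set s2 := B.filter (fun q => q.1 = (j0 : ℕ) ∧ q.2 ≠ i0) with hs2def
  have hs1 : s1.card ≤ X := by
    have himg : s1.image Prod.fst ⊆ Cset := by
      intro j hj
      obtain ⟨q, hqs, rfl⟩ := Finset.mem_image.mp hj
      rw [hs1def, Finset.mem_filter] at hqs
      obtain ⟨hqB, hq2, hq1⟩ := hqs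
      rw [hBdef, mem_growthStep] at hqB
      rcases hqB with hqA | ⟨hqrect, hqZ⟩
      · exact absurd hq2 (hi0 q hqA)
      · have hrq : A.filter (fun q' => q'.2 = q.2 ∧ q'.1 ≠ q.1) = ∅ := by
          rw [Finset.filter_eq_empty_iff]
          intro q' hq' hcond
          exact hi0 q' hq' (hq2 ▸ hcond.1)
        rw [hrq] at hqZ
        simp only [Finset.card_empty] at hqZ
        have hble : b ≤ (A.filter (fun q' => q'.1 = q.1 ∧ q'.2 ≠ q.2)).card := by
          by_contra hlt
          push_neg at hlt
          exact hqZ (hZdc _ ((hcol _).mpr hlt) _ (le_refl 0)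
            (le_refl _))
        rw [hCdef, Finset.mem_filter]
        refine ⟨Finset.mem_range.mpr (mem_rectF.mp hqrect).1, ?_⟩
        refine le_trans hble (Finset.card_le_card ?_)
        intro q' hq'
        rw [Finset.mem_filter] at hq' ⊢
        exact ⟨hq'.1, hq'.2.1⟩
    have hinj : Set.InjOn Prod.fst (↑s1 : Set (ℕ × ℕ)) := by
      intro q hq q' hq' he
      rw [Finset.coe_filter] at hq hq'
      simp only [Set.mem_setOf_eq] at hq hq'
      exact Prod.ext he (hq.2.1.trans hq'.2.1.symm)
    calc s1.card = (s1.image Prod.fst).card := (Finset.card_image_of_injOn hinj).symm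
    _ ≤ Cset.card := Finset.card_le_card himg
  have hs2 : s2.card ≤ Y := by
    have himg : s2.image Prod.snd ⊆ Rset := by
      intro i hi
      obtain ⟨q, hqs, rfl⟩ := Finset.mem_image.mp hi
      rw [hs2def, Finset.mem_filter] at hqs
      obtain ⟨hqB, hq1, hq2⟩ := hqs
      rw [hBdef, mem_growthStep] at hqB
      rcases hqB with hqA | ⟨hqrect, hqZ⟩
      · exact absurd hq1 (hj0 q hqA)
      · have hcq : A.filter (fun q' => q'.1 = q.1 ∧ q'.2 ≠ q.2) = ∅ := by
          rw [Finset.filter_eq_empty_iff]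
          intro q' hq' hcond
          exact hj0 q' hq' (hq1 ▸ hcond.1)
        rw [hcq] at hqZ
        simp only [Finset.card_empty] at hqZ
        have hale : a ≤ (A.filter (fun q' => q'.2 = q.2 ∧ q'.1 ≠ q.1)).card := by
          by_contra hlt
          push_neg at hlt
          exact hqZ (hZdc _ ((hrow _).mpr hlt) _ (le_refl _) (le_refl 0))
        rw [hRdef, Finset.mem_filter]
        refine ⟨Finset.mem_range.mpr (mem_rectF.mp hqrect).2, ?_⟩
        refine le_trans hale (Finset.card_le_card ?_)
        intro q' hq'
        rw [Finset.mem_filter] at hq' ⊢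
        exact ⟨hq'.1, hq'.2.1⟩
    have hinj : Set.InjOn Prod.snd (↑s2 : Set (ℕ × ℕ)) := by
      intro q hq q' hq' he
      rw [Finset.coe_filter] at hq hq'
      simp only [Set.mem_setOf_eq] at hq hq'
      exact Prod.ext (hq.2.1.trans hq'.2.1.symm) he
    calc s2.card = (s2.image Prod.snd).card := (Finset.card_image_of_injOn hinj).symm
    _ ≤ Rset.card := Finset.card_le_card himg
  have hXY : ((X : ℕ), (Y : ℕ)) ∉ Z := fun h => hnotZ (hZdc _ h _ hs1 hs2)
  -- extract a concave corner (x,y) with x ≤ X, y ≤ Y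
  have hxex : ∃ x', ((x' : ℕ), Y) ∉ Z := ⟨X, hXY⟩
  set x := Nat.find hxex with hxdef
  have hx1 : ((x : ℕ), Y) ∉ Z := Nat.find_spec hxex
  have hxX : x ≤ X := Nat.find_min' hxex hXY
  have hxmin : x ≠ 0 → ((x - 1 : ℕ), Y) ∈ Z := by
    intro h0
    by_contra hc
    exact Nat.find_min hxex (show x - 1 < x by omega) hc
  have hyex : ∃ y', ((x : ℕ), (y' : ℕ)) ∉ Z := ⟨Y, hx1⟩
  set y := Nat.find hyex with hydef
  have hy1 : ((x : ℕ), (y : ℕ)) ∉ Z := Nat.find_spec hyex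
  have hyY : y ≤ Y := Nat.find_min' hyex hx1
  have hymin : y ≠ 0 → ((x : ℕ), (y - 1 : ℕ)) ∈ Z := by
    intro h0
    by_contra hc
    exact Nat.find_min hyex (show y - 1 < y by omega) hc
  have hcorner : concaveCorner Z x y := by
    refine ⟨hy1, ?_, ?_⟩
    · by_cases h0 : x = 0
      · exact Or.inl h0
      · exact Or.inr (hZdc _ (hxmin h0) _ (le_refl _) hyY)
    · by_cases h0 : y = 0
      · exact Or.inl h0
      · exact Or.inr (hymin h0)
  refine ⟨x, y, hcorner, ?_⟩
  have key : b * x + a * y ≤ A.card + x * y := by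
    have hc' : (b * X + a * Y : ℤ) ≤ (A.card : ℤ) + X * Y := by exact_mod_cast hcount
    have hxX' : (x : ℤ) ≤ X := by exact_mod_cast hxX
    have hyY' : (y : ℤ) ≤ Y := by exact_mod_cast hyY
    have hXa' : (X : ℤ) ≤ a := by exact_mod_cast hXa
    have hYb' : (Y : ℤ) ≤ b := by exact_mod_cast hYb
    have h1 : (0 : ℤ) ≤ ((X : ℤ) - x) * ((b : ℤ) - Y) :=
      mul_nonneg (by omega) (by omega)
    have h2 : (0 : ℤ) ≤ ((Y : ℤ) - y) * ((a : ℤ) - x) :=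
      mul_nonneg (by omega) (by omega)
    have : (b * x + a * y : ℤ) ≤ (A.card : ℤ) + x * y := by nlinarith
    exact_mod_cast this
  exact Nat.sub_le_iff_le_add.mpr key

end Main

/-- if `a` and `b` are the sizes of the longest row and column of the
downward-closed set `Z`, and `m, n > ab`, then the minimum size of a set occupying
all of `R_{n,m}` in at most 2 steps equals the minimum of `bx + ay − xy` over
concave corners `(x,y)` of `Z`. -/
theorem stmt_18 (Z : Set (ℕ × ℕ))
    (hZdc : ∀ p ∈ Z, ∀ q : ℕ × ℕ, q.1 ≤ p.1 → q.2 ≤ p.2 → q ∈ Z)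
    (a b m n : ℕ)
    (hrow : ∀ x : ℕ, ((x, 0) ∈ Z ↔ x < a))
    (hcol : ∀ y : ℕ, ((0, y) ∈ Z ↔ y < b))
    (hm : a * b < m) (hn : a * b < n) :
    sInf {k : ℕ | ∃ A : Finset (ℕ × ℕ), A ⊆ rectF n m ∧ A.card = k ∧
        (growthStep Z n m)^[2] A = rectF n m} =
    sInf {v : ℕ | ∃ x y : ℕ, concaveCorner Z x y ∧ v = b * x + a * y - x * y} := by
  set S1 := {k : ℕ | ∃ A : Finset (ℕ × ℕ), A ⊆ rectF n m ∧ A.card = k ∧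
      (growthStep Z n m)^[2] A = rectF n m} with hS1def
  set S2 := {v : ℕ | ∃ x y : ℕ, concaveCorner Z x y ∧ v = b * x + a * y - x * y}
    with hS2def
  -- a ≤ n and b ≤ m
  have han : a ≤ n := by
    by_cases h00 : ((0 : ℕ), (0 : ℕ)) ∈ Z
    · have hb : 0 < b := (hcol 0).mp h00
      calc a ≤ a * b := Nat.le_mul_of_pos_right a hb
      _ ≤ n := hn.le
    · have : ¬ (0 < a) := fun h => h00 ((hrow 0).mpr h)
      omega
  have hbm : b ≤ m := by
    by_cases h00 : ((0 : ℕ), (0 : ℕ)) ∈ Z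
    · have ha : 0 < a := (hrow 0).mp h00
      calc b ≤ a * b := Nat.le_mul_of_pos_left b ha
      _ ≤ m := hm.le
    · have : ¬ (0 < b) := fun h => h00 ((hcol 0).mpr h)
      omega
  have hS2ne : S2.Nonempty := by
    refine ⟨b * a + a * 0 - a * 0, a, 0, ⟨?_, ?_, Or.inl rfl⟩, rfl⟩
    · rw [hrow]; omega
    · by_cases h0 : a = 0
      · exact Or.inl h0
      · exact Or.inr (by rw [hrow]; omega)
  have hS1ne : S1.Nonempty := by
    refine ⟨(rectF n m).card, rectF n m, le_refl _, rfl, ?_⟩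
    have hstep : growthStep Z n m (rectF n m) = rectF n m :=
      Finset.Subset.antisymm (growthStep_subset_rect (le_refl _)) subset_growthStep
    rw [show (growthStep Z n m)^[2] (rectF n m)
      = growthStep Z n m (growthStep Z n m (rectF n m)) from rfl, hstep, hstep]
  apply le_antisymm
  · -- LHS ≤ RHS via construction
    obtain ⟨x, y, hcorner, hval⟩ := Nat.sInf_mem hS2ne
    obtain ⟨hxyZ, hcx, hcy⟩ := hcorner
    have hx : x ≤ a := by
      rcases hcx with h0 | h1
      · omega
      · have := hZdc _ h1 (x - 1, 0) (le_refl _) (Nat.zero_le _)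
        rw [hrow] at this
        omega
    have hy : y ≤ b := by
      rcases hcy with h0 | h1
      · omega
      · have := hZdc _ h1 (0, y - 1) (Nat.zero_le _) (le_refl _)
        rw [hcol] at this
        omega
    obtain ⟨A, hAsub, hAcard, hAT⟩ := upper_bound hZdc hrow hcol han hbm hx hy hxyZ
    rw [hval]
    exact Nat.sInf_le ⟨A, hAsub, by rw [hAcard], hAT⟩
  · -- RHS ≤ LHS via lower bound
    obtain ⟨A, hAsub, hAcard, hAT⟩ := Nat.sInf_mem hS1ne
    obtain ⟨x, y, hcorner, hle⟩ := lower_bound hZdc hrow hcol hm hn hAsub hAT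
    rw [← hAcard]
    exact le_trans (Nat.sInf_le ⟨x, y, hcorner, rfl⟩) hle
end
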